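/- arXiv:1708.09821 — 7 statements merged into one kernel-verified Lean document; each statement's English description precedes it below -/
import Mathlib

section
/- Let Γ be a countably infinite group with a proper right-invariant metric d, and let α be a free continuous action of Γ on a nonempty Polish space X. Then for every sequence (d₀, d₁, …) in [0, ∞) there exists a Baire measurable coloring f : X → ℕ such that for every c ∈ ℕ: whenever x, y ∈ X are distinct, f(x) = f(y) = c, and γ · x = y for some γ ∈ Γ, then d(1, γ) > d_c. -/
open Set Function Topology

namespace DescColor

/-- A set is *Baire measurable* if it differs from an open set by a meager set. -/
def BaireMSet {X : Type*} [TopologicalSpace X] (S : Set X) : Prop :=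
  ∃ U : Set X, IsOpen U ∧ IsMeagre (symmDiff S U)

/-- A function is *Baire measurable* if preimages of measurable (Borel) sets are
Baire measurable. -/
def BaireMFun {X Y : Type*} [TopologicalSpace X] [MeasurableSpace Y] (f : X → Y) : Prop :=
  ∀ B : Set Y, MeasurableSet B → BaireMSet (f ⁻¹' B)

variable {Γ : Type*}

/-- The shift action of `Γ` on colorings `Γ → ℕ`: `(γ · ω)(δ) = ω (δ γ)`. -/
def shift [Group Γ] (γ : Γ) (ω : Γ → ℕ) : Γ → ℕ := fun δ => ω (δ * γ)

/-- A subshift: a closed shift-invariant set of colorings. -/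
def IsSubshift [Group Γ] (Ω : Set (Γ → ℕ)) : Prop :=
  IsClosed Ω ∧ ∀ (γ : Γ), ∀ ω ∈ Ω, shift γ ω ∈ Ω

/-- The coding map `π_f(x)(γ) = f (γ • x)`. -/
def codingMap [Group Γ] {X : Type*} [MulAction Γ X] (f : X → ℕ) (x : X) : Γ → ℕ :=
  fun γ => f (γ • x)

/-- The action of `Γ` on `X` admits a Baire measurable `Ω`-coloring. -/
def HasBMColoring [Group Γ] (X : Type*) [TopologicalSpace X] [MulAction Γ X]
    (Ω : Set (Γ → ℕ)) : Prop :=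
  ∃ f : X → ℕ, BaireMFun f ∧ {x : X | codingMap f x ∈ Ω} ∈ residual X

/-- The action of `Γ` on `X` is generically smooth. -/
def GenSmooth (Γ : Type*) [Group Γ] (X : Type*) [TopologicalSpace X] [MulAction Γ X] : Prop :=
  ∃ f : X → ℝ, BaireMFun f ∧ ∀ x y : X, f x = f y ↔ ∃ γ : Γ, γ • x = y

/-- The shift action of `Γ` on `ℕ^Γ` admits a Baire measurable `Ω`-coloring. -/
def ShiftHasBMColoring (Γ : Type*) [Group Γ] (Ω : Set (Γ → ℕ)) : Prop :=
  ∃ f : (Γ → ℕ) → ℕ, BaireMFun f ∧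
    {ω : Γ → ℕ | (fun γ : Γ => f (shift γ ω)) ∈ Ω} ∈ residual (Γ → ℕ)

/-- A free continuous action of `Γ` on a Polish space. -/
structure FreePolishAction (Γ : Type*) [Group Γ] where
  X : Type
  ts : TopologicalSpace X
  polish : @PolishSpace X ts
  smul : Γ → X → X
  one_smul' : ∀ x, smul 1 x = x
  mul_smul' : ∀ γ δ x, smul (γ * δ) x = smul γ (smul δ x)
  cont : ∀ γ : Γ, @Continuous X X ts ts (smul γ)
  free : ∀ (γ : Γ) (x : X), smul γ x = x → γ = 1

/-- A free continuous action on a Polish space admits a Baire measurable `Ω`-coloring. -/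
def FreePolishAction.HasBMCol [Group Γ] (α : FreePolishAction Γ) (Ω : Set (Γ → ℕ)) : Prop :=
  letI := α.ts
  ∃ f : α.X → ℕ, BaireMFun f ∧ {x : α.X | (fun γ : Γ => f (α.smul γ x)) ∈ Ω} ∈ residual α.X

/-- A free continuous action on a Polish space is generically smooth. -/
def FreePolishAction.IsGenSmooth [Group Γ] (α : FreePolishAction Γ) : Prop :=
  letI := α.ts
  ∃ f : α.X → ℝ, BaireMFun f ∧ ∀ x y : α.X, f x = f y ↔ ∃ γ : Γ, α.smul γ x = y

/-- A subshift is *hard* if every free continuous action of `Γ` on a Polish space that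
admits a Baire measurable `Ω`-coloring is generically smooth. -/
def Hard (Γ : Type*) [Group Γ] (Ω : Set (Γ → ℕ)) : Prop :=
  ∀ α : FreePolishAction Γ, α.HasBMCol Ω → α.IsGenSmooth

/-- A subshift is *easy* if every free continuous action of `Γ` on a Polish space
admits a Baire measurable `Ω`-coloring. -/
def Easy (Γ : Type*) [Group Γ] (Ω : Set (Γ → ℕ)) : Prop :=
  ∀ α : FreePolishAction Γ, α.HasBMCol Ω

/-- Finite partial colorings of `Γ`: partial maps `Γ ⇀ ℕ` with finite domain. -/
abbrev FPC (Γ : Type*) : Type _ := {φ : Γ → Option ℕ // {γ : Γ | φ γ ≠ none}.Finite}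

/-- The domain of a finite partial coloring. -/
def domP (φ : FPC Γ) : Set Γ := {γ : Γ | φ.1 γ ≠ none}

/-- `Fin(Ω)`: the set of finite partial colorings extending to an element of `Ω`. -/
def FinOf (Ω : Set (Γ → ℕ)) : Set (FPC Γ) :=
  {φ | ∃ ω ∈ Ω, ∀ (γ : Γ) (c : ℕ), φ.1 γ = some c → ω γ = c}

/-- `g : FPC Γ → Bool` codes (the set `Fin(Ω)` of) the subshift `Ω`. -/
def CodesSubshift [Group Γ] (g : FPC Γ → Bool) (Ω : Set (Γ → ℕ)) : Prop :=
  IsSubshift Ω ∧ ∀ φ : FPC Γ, g φ = true ↔ φ ∈ FinOf Ω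

/-- The shift action of `Γ` on finite partial colorings: `(γ · φ)(δ) = φ(δγ)`. -/
def shiftP [Group Γ] (γ : Γ) (φ : FPC Γ) : FPC Γ :=
  ⟨fun δ => φ.1 (δ * γ), by
    apply (φ.2.image fun δ => δ * γ⁻¹).subset
    intro δ hδ
    exact ⟨δ * γ, hδ, by simp⟩⟩

/-- The empty partial coloring. -/
def emptyP (Γ : Type*) : FPC Γ := ⟨fun _ => none, by simp⟩

/-- The union (join) of two partial colorings (values of `φ` take precedence). -/
def joinP (φ ψ : FPC Γ) : FPC Γ :=
  ⟨fun δ => match φ.1 δ with | some c => some c | none => ψ.1 δ, by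
    apply (φ.2.union ψ.2).subset
    intro δ hδ
    by_cases h : φ.1 δ = none
    · right
      simp only [mem_setOf_eq, h] at hδ
      exact hδ
    · exact Or.inl h⟩

/-- The union of a finite list of partial colorings. -/
def joinList (l : List (FPC Γ)) : FPC Γ := l.foldr joinP (emptyP Γ)

/-- `φ[γ, r]`: the restriction of `φ` to the closed ball `B(γ, r)`. -/
noncomputable def restrictBall [MetricSpace Γ] (φ : FPC Γ) (γ : Γ) (r : ℝ) : FPC Γ :=
  ⟨fun δ => if dist γ δ ≤ r then φ.1 δ else none, by
    apply φ.2.subset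
    intro δ hδ
    by_cases h : dist γ δ ≤ r
    · simp only [mem_setOf_eq, if_pos h] at hδ
      exact hδ
    · simp only [mem_setOf_eq, if_neg h] at hδ
      exact absurd rfl hδ⟩

/-- `φ ∪ {(γ, c)}`. -/
def insertP [DecidableEq Γ] (φ : FPC Γ) (γ : Γ) (c : ℕ) : FPC Γ :=
  ⟨fun δ => if δ = γ then some c else φ.1 δ, by
    apply (φ.2.insert γ).subset
    intro δ hδ
    by_cases h : δ = γ
    · exact Or.inl h
    · right
      simp only [mem_setOf_eq, if_neg h] at hδ
      exact hδ⟩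

/-- The restriction of a total coloring `ω` to a finite set `S`. -/
def restrictTo [DecidableEq Γ] (ω : Γ → ℕ) (S : Finset Γ) : FPC Γ :=
  ⟨fun δ => if δ ∈ S then some (ω δ) else none, by
    apply S.finite_toSet.subset
    intro δ hδ
    by_cases h : δ ∈ S
    · exact h
    · simp only [mem_setOf_eq, if_neg h] at hδ
      exact absurd rfl hδ⟩

/-- Post-composition of a partial coloring with `ρ : ℕ → ℕ`. -/
def mapP (ρ : ℕ → ℕ) (φ : FPC Γ) : FPC Γ :=
  ⟨fun δ => (φ.1 δ).map ρ, by
    apply φ.2.subset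
    intro δ hδ
    intro h
    simp only [mem_setOf_eq, h] at hδ
    exact hδ rfl⟩

/-- `ψ` is a restriction of `φ`. -/
def IsRestrictionOf (ψ φ : FPC Γ) : Prop := ∀ δ : Γ, ψ.1 δ = none ∨ ψ.1 δ = φ.1 δ

/-- A `Γ`-ideal: a shift-invariant set of finite partial colorings closed under
restrictions. -/
def IsGammaIdeal [Group Γ] (P : Set (FPC Γ)) : Prop :=
  (∀ (γ : Γ), ∀ φ ∈ P, shiftP γ φ ∈ P) ∧
  (∀ φ ∈ P, ∀ ψ : FPC Γ, IsRestrictionOf ψ φ → ψ ∈ P)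

/-- An extendable `Γ`-ideal. -/
def IsExtendable [DecidableEq Γ] (P : Set (FPC Γ)) : Prop :=
  ∀ φ ∈ P, ∀ γ : Γ, φ.1 γ = none → ∃ c : ℕ, insertP φ γ c ∈ P

/-- `φ` and `ψ` are `R`-separated: `dist(dom φ, dom ψ) > R φ + R ψ`. -/
def RSeparated [MetricSpace Γ] (R : FPC Γ → ℝ) (φ ψ : FPC Γ) : Prop :=
  ∀ γ ∈ domP φ, ∀ δ ∈ domP ψ, R φ + R ψ < dist γ δ

/-- The join property of a `Γ`-ideal `P`. -/
def HasJoinProperty [Group Γ] [MetricSpace Γ] (P : Set (FPC Γ)) : Prop :=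
  ∃ R : FPC Γ → ℝ, (∀ φ, 0 ≤ R φ) ∧ (∀ (γ : Γ), ∀ φ ∈ P, R (shiftP γ φ) = R φ) ∧
    ∀ l : List (FPC Γ), (∀ φ ∈ l, φ ∈ P) → l.Pairwise (RSeparated R) → joinList l ∈ P

/-- `P^loc_r`: partial colorings that are `r`-locally in `P`. -/
def LocallyIn [MetricSpace Γ] (P : Set (FPC Γ)) (r : ℕ → ℝ) : Set (FPC Γ) :=
  {φ | ∀ (γ : Γ) (c : ℕ), φ.1 γ = some c → restrictBall φ γ (r c) ∈ P}

/-- A local `Γ`-ideal. -/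
def IsLocal [MetricSpace Γ] (P : Set (FPC Γ)) : Prop :=
  ∃ r : ℕ → ℝ, (∀ c, 0 ≤ r c) ∧ P = LocallyIn P r

/-- `Col(P)`: colorings all of whose finite restrictions lie in `P`. -/
def ColOf [DecidableEq Γ] (P : Set (FPC Γ)) : Set (Γ → ℕ) :=
  {ω | ∀ S : Finset Γ, restrictTo ω S ∈ P}

/-! ### The space of Baire measurable functions -/

/-- Baire measurable functions from `X` to `Y`. -/
abbrev BMFunSub (X Y : Type*) [TopologicalSpace X] [MeasurableSpace Y] :=
  {f : X → Y // BaireMFun f}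

/-- Equality on a comeager set. -/
def BFunRel {X Y : Type*} [TopologicalSpace X] [MeasurableSpace Y]
    (f g : BMFunSub X Y) : Prop := {x : X | f.1 x = g.1 x} ∈ residual X

/-- `B(X,Y)`: Baire measurable functions modulo equality on a comeager set. -/
abbrev BFun (X Y : Type*) [TopologicalSpace X] [MeasurableSpace Y] :=
  Quot (BFunRel (X := X) (Y := Y))

/-- `[U, A]`: the classes of functions `f` with `U ∖ f⁻¹(A)` meager. -/
def forceSet {X Y : Type*} [TopologicalSpace X] [MeasurableSpace Y]
    (U : Set X) (A : Set Y) : Set (BFun X Y) :=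
  {F | ∃ f : BMFunSub X Y, Quot.mk BFunRel f = F ∧ IsMeagre (U \ f.1 ⁻¹' A)}

/-- `Σ(X,Y)`: the σ-algebra generated by the sets `[U, A]` for `U` nonempty open
and `A` Borel. -/
def SigmaXY (X Y : Type*) [TopologicalSpace X] [MeasurableSpace Y] :
    MeasurableSpace (BFun X Y) :=
  MeasurableSpace.generateFrom
    {S | ∃ (U : Set X) (A : Set Y), IsOpen U ∧ U.Nonempty ∧ MeasurableSet A ∧ S = forceSet U A}

/-! Freeness and properness let every nonempty open set shrink to a nonempty open set that is
disjoint from its translates by the finitely many `γ ≠ 1` with `d(1, γ) ≤ r`. Doing this inside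
the `k`-th basic open set with `r = d(2k)` yields open sets, colored `2k`, whose union is dense.
The meagre remainder is colored by odd colors via a coloring that is injective on orbits; being
meagre, it does not affect Baire measurability. -/

open Filter MulAction

section BaireMeasurable

variable {X : Type*} [TopologicalSpace X]

theorem baireMSet_iff_baireMeasurableSet {s : Set X} :
    BaireMSet s ↔ BaireMeasurableSet s := by
  rw [BaireMeasurableSet.iff_residualEq_isOpen]
  refine exists_congr fun u => and_congr_right fun _ => ?_
  rw [IsMeagre, compl_symmDiff, eventuallyEq_set]
  exact Iff.of_eq (congrArg (· ∈ residual X) (ext fun x => mem_bihimp_iff))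

theorem exists_baireMFun_mem_of_covers {A : ℕ → Set X}
    (hA : ∀ n, BaireMeasurableSet (A n)) (hcover : ∀ x, ∃ n, x ∈ A n) :
    ∃ f : X → ℕ, BaireMFun f ∧ ∀ x, x ∈ A (f x) := by
  classical
  refine ⟨fun x => Nat.find (hcover x), fun B _ => ?_, fun x => Nat.find_spec (hcover x)⟩
  rw [baireMSet_iff_baireMeasurableSet, ← biUnion_preimage_singleton]
  simp_rw [preimage_find_eq_disjointed]
  exact .biUnion B.to_countable fun n _ => MeasurableSet.disjointed hA n

end BaireMeasurable

theorem exists_isOpen_dense_iUnion {X : Type*} [TopologicalSpace X] [SecondCountableTopology X]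
    [Nonempty X] (P : ℕ → Set X → Prop)
    (hP : ∀ k V, IsOpen V → V.Nonempty → ∃ U ⊆ V, IsOpen U ∧ U.Nonempty ∧ P k U) :
    ∃ U : ℕ → Set X, (∀ k, IsOpen (U k) ∧ P k (U k)) ∧ Dense (⋃ k, U k) := by
  obtain ⟨b, hbc, hb_empty, hb⟩ := TopologicalSpace.exists_countable_basis X
  obtain ⟨V, rfl⟩ := hbc.exists_eq_range (.of_sUnion_eq_univ hb.sUnion_eq)
  have hV (k : ℕ) : IsOpen (V k) ∧ (V k).Nonempty :=
    ⟨hb.isOpen (mem_range_self k), nonempty_iff_ne_empty.2 fun h => hb_empty (h ▸ mem_range_self k)⟩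
  choose U hUV hUo hUne hPU using fun k => hP k (V k) (hV k).1 (hV k).2
  refine ⟨U, fun k => ⟨hUo k, hPU k⟩, hb.dense_iff.2 ?_⟩
  rintro _ ⟨k, rfl⟩ -
  obtain ⟨x, hx⟩ := hUne k
  exact ⟨x, hUV k hx, mem_iUnion.2 ⟨k, hx⟩⟩

theorem exists_isOpen_mem_forall_smul_notMem {G X : Type*} [SMul G X] [TopologicalSpace X]
    [T2Space X] [ContinuousConstSMul G X] {S : Set G} (hS : S.Finite) {x : X}
    (hx : ∀ g ∈ S, g • x ≠ x) {V : Set X} (hV : V ∈ 𝓝 x) :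
    ∃ U ⊆ V, IsOpen U ∧ x ∈ U ∧ ∀ g ∈ S, ∀ y ∈ U, g • y ∉ U := by
  have key (g : G) (hg : g ∈ S) : ∀ᶠ U in (𝓝 x).smallSets, ∀ y ∈ U, g • y ∉ U := by
    obtain ⟨A, hA, B, hB, hAB⟩ := Filter.disjoint_iff.1 (disjoint_nhds_nhds.2 (hx g hg))
    rw [eventually_smallSets' fun s t hst h y hy hgy => h y (hst hy) (hst hgy)]
    exact ⟨B ∩ (g • ·) ⁻¹' A, inter_mem hB ((continuous_const_smul g).continuousAt hA),
      fun y hy hgy => disjoint_left.1 hAB hy.2 hgy.1⟩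
  obtain ⟨t, ht, htU⟩ := eventually_smallSets.1
    (((eventually_all_finite hS).2 key).and (eventually_smallSets_subset.2 hV))
  obtain ⟨hsep, hsub⟩ := htU (interior t) interior_subset
  exact ⟨interior t, hsub, isOpen_interior, mem_interior_iff_mem_nhds.2 ht, hsep⟩

section Separated

variable {Γ X : Type*} [Group Γ] [MetricSpace Γ] [MulAction Γ X]

variable (Γ) in
def IsSmulSeparated (r : ℝ) (A : Set X) : Prop :=
  ∀ x ∈ A, ∀ γ : Γ, γ • x ∈ A → γ • x ≠ x → r < dist 1 γ

theorem IsSmulSeparated.mono {r : ℝ} {A B : Set X} (hB : IsSmulSeparated Γ r B) (hAB : A ⊆ B) :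
    IsSmulSeparated Γ r A :=
  fun x hx γ hγx => hB x (hAB hx) γ (hAB hγx)

theorem isSmulSeparated_preimage_singleton {g : X → ℕ}
    (hg : ∀ (γ : Γ) x, g (γ • x) = g x → γ • x = x) (r : ℝ) (k : ℕ) :
    IsSmulSeparated Γ r (g ⁻¹' {k}) :=
  fun x hx γ hγx hne => absurd (hg γ x (hγx.trans hx.symm)) hne

theorem exists_isOpen_isSmulSeparated [TopologicalSpace X] [T2Space X] [ContinuousConstSMul Γ X]
    (hproper : ∀ r : ℝ, (Metric.closedBall (1 : Γ) r).Finite)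
    (hfree : ∀ (γ : Γ) (x : X), γ • x = x → γ = 1) (r : ℝ) {V : Set X} (hV : IsOpen V)
    (hne : V.Nonempty) : ∃ U ⊆ V, IsOpen U ∧ U.Nonempty ∧ IsSmulSeparated Γ r U := by
  obtain ⟨x, hx⟩ := hne
  obtain ⟨U, hUV, hUo, hxU, hU⟩ := exists_isOpen_mem_forall_smul_notMem
    ((hproper r).sdiff (t := {1}))
    (fun γ hγ hγx => hγ.2 (hfree γ x hγx)) (hV.mem_nhds hx)
  refine ⟨U, hUV, hUo, ⟨x, hxU⟩, fun y hy γ hγy hne => ?_⟩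
  by_contra! hle
  have hγ1 : γ ≠ 1 := by rintro rfl; exact hne (one_smul Γ y)
  exact hU γ ⟨Metric.mem_closedBall.2 (dist_comm γ 1 ▸ hle), hγ1⟩ y hy hγy

end Separated

theorem exists_nat_injective_on_orbits {G X : Type*} [Group G] [Countable G] [MulAction G X] :
    ∃ g : X → ℕ, ∀ (γ : G) x, g (γ • x) = g x → γ • x = x := by
  classical
  obtain ⟨e, he⟩ := exists_surjective_nat G
  let rep : X → X := fun x => (Quotient.mk (orbitRel G X) x).out
  have hrep (x : X) : ∃ n, e n • rep x = x := by
    obtain ⟨γ, hγ⟩ := Quotient.mk_out (s := orbitRel G X) x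
    obtain ⟨n, hn⟩ := he γ⁻¹
    exact ⟨n, by rw [hn, inv_smul_eq_iff]; exact hγ.symm⟩
  refine ⟨fun x => Nat.find (hrep x), fun γ x h => ?_⟩
  beta_reduce at h
  have hq : rep (γ • x) = rep x :=
    congrArg Quotient.out (Quotient.sound (mem_orbit x γ))
  calc γ • x = e (Nat.find (hrep (γ • x))) • rep (γ • x) := (Nat.find_spec (hrep _)).symm
    _ = e (Nat.find (hrep x)) • rep x := by rw [h, hq]
    _ = x := Nat.find_spec (hrep x)

theorem exists_covers_isSmulSeparated {Γ X : Type*} [Group Γ] [MetricSpace Γ] [MulAction Γ X]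
    [TopologicalSpace X] {d : ℕ → ℝ} {U : ℕ → Set X}
    (hU : ∀ k, IsOpen (U k) ∧ IsSmulSeparated Γ (d (2 * k)) (U k)) (hU_dense : Dense (⋃ k, U k))
    {g : X → ℕ} (hg : ∀ (γ : Γ) x, g (γ • x) = g x → γ • x = x) :
    ∃ A : ℕ → Set X, (∀ n, BaireMeasurableSet (A n) ∧ IsSmulSeparated Γ (d n) (A n)) ∧
      ∀ x, ∃ n, x ∈ A n := by
  have hmeagre : IsMeagre (⋃ k, U k)ᶜ := by
    rw [IsMeagre, compl_compl]
    exact residual_of_dense_open (isOpen_iUnion fun k => (hU k).1) hU_dense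
  let A : ℕ → Set X := fun n => if Even n then U (n / 2) else (⋃ k, U k)ᶜ ∩ g ⁻¹' {n / 2}
  have hA_even (k : ℕ) : A (2 * k) = U k := by simp [A]
  have hA_odd (k : ℕ) : A (2 * k + 1) = (⋃ k, U k)ᶜ ∩ g ⁻¹' {k} := by
    simp [A, show (2 * k + 1) / 2 = k by omega]
  refine ⟨A, fun n => ?_, fun x => ?_⟩
  · obtain ⟨k, rfl | rfl⟩ := Nat.even_or_odd' n
    · exact hA_even k ▸ ⟨(hU k).1.baireMeasurableSet, (hU k).2⟩
    · exact hA_odd k ▸ ⟨(hmeagre.mono inter_subset_left).baireMeasurableSet,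
        (isSmulSeparated_preimage_singleton hg _ k).mono inter_subset_right⟩
  · by_cases hx : x ∈ ⋃ k, U k
    · obtain ⟨k, hk⟩ := mem_iUnion.1 hx
      exact ⟨2 * k, hA_even k ▸ hk⟩
    · exact ⟨2 * g x + 1, hA_odd (g x) ▸ ⟨hx, rfl⟩⟩

theorem stmt10_general {Γ : Type*} [Group Γ] [Countable Γ] [MetricSpace Γ]
    (hproper : ∀ (γ : Γ) (r : ℝ), (Metric.closedBall γ r).Finite)
    (X : Type*) [TopologicalSpace X] [PolishSpace X] [Nonempty X] [MulAction Γ X]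
    (hcont : ∀ γ : Γ, Continuous fun x : X => γ • x)
    (hfree : ∀ (γ : Γ) (x : X), γ • x = x → γ = 1)
    (d : ℕ → ℝ) :
    ∃ f : X → ℕ, BaireMFun f ∧
      ∀ (c : ℕ) (x y : X), x ≠ y → f x = c → f y = c →
        ∀ γ : Γ, γ • x = y → d c < dist (1 : Γ) γ := by
  have : ContinuousConstSMul Γ X := ⟨hcont⟩
  obtain ⟨U, hU, hU_dense⟩ := exists_isOpen_dense_iUnion (fun k => IsSmulSeparated Γ (d (2 * k)))
    fun k _ hV hne => exists_isOpen_isSmulSeparated (hproper 1) hfree _ hV hne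
  obtain ⟨g, hg⟩ := exists_nat_injective_on_orbits (G := Γ) (X := X)
  obtain ⟨A, hA, hA_cover⟩ := exists_covers_isSmulSeparated hU hU_dense hg
  obtain ⟨f, hf, hfA⟩ := exists_baireMFun_mem_of_covers (fun n => (hA n).1) hA_cover
  refine ⟨f, hf, ?_⟩
  rintro c x _ hxy rfl hfy γ rfl
  exact (hA _).2 x (hfA x) γ (hfy ▸ hfA _) hxy.symm

/-- Marks–Unger: for every free continuous action of `Γ` on a nonempty Polish space and
every sequence of radii there is a Baire measurable coloring whose color classes are
suitably spread out. -/
theorem stmt10 {Γ : Type*} [Group Γ] [Countable Γ] [Infinite Γ] [MetricSpace Γ]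
    (hinv : ∀ γ δ g : Γ, dist (γ * g) (δ * g) = dist γ δ)
    (hproper : ∀ (γ : Γ) (r : ℝ), (Metric.closedBall γ r).Finite)
    (X : Type*) [TopologicalSpace X] [PolishSpace X] [Nonempty X] [MulAction Γ X]
    (hcont : ∀ γ : Γ, Continuous fun x : X => γ • x)
    (hfree : ∀ (γ : Γ) (x : X), γ • x = x → γ = 1)
    (d : ℕ → ℝ) (hd : ∀ c, 0 ≤ d c) :
    ∃ f : X → ℕ, BaireMFun f ∧
      ∀ (c : ℕ) (x y : X), x ≠ y → f x = c → f y = c →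
        ∀ γ : Γ, γ • x = y → d c < dist (1 : Γ) γ :=
  stmt10_general hproper X hcont hfree d

end DescColor
end

section
/- Let Γ be a countably infinite group and let C be a set of subshifts of ℕ^Γ such that the set {Fin(Ω) : Ω ∈ C} is a compact subset of the space of all subsets of the (countable) set of finite partial colorings of Γ, equipped with the product (Cantor) topology. Then ⋃_{Ω ∈ C} Ω is closed in ℕ^Γ, and hence is a subshift. -/
open Set Function Topology

namespace DescColor

variable {Γ : Type*}

/-- If a family of subshifts has compact set of codes, then its union is closed,
hence a subshift. -/
theorem stmt12 {Γ : Type*} [Group Γ] [Countable Γ] [Infinite Γ]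
    (C : Set (Set (Γ → ℕ))) (hC : ∀ Ω ∈ C, IsSubshift Ω)
    (hcompact : IsCompact
      {g : FPC Γ → Bool | ∃ Ω ∈ C, ∀ φ : FPC Γ, g φ = true ↔ φ ∈ FinOf Ω}) :
    IsClosed (⋃₀ C) ∧ IsSubshift (⋃₀ C) := by
  classical
  have hclosed : IsClosed (⋃₀ C) := by
    apply isClosed_of_closure_subset
    intro ω hω
    set K := {g : FPC Γ → Bool | ∃ Ω ∈ C, ∀ φ : FPC Γ, g φ = true ↔ φ ∈ FinOf Ω} with hK
    set t : Finset Γ → Set (FPC Γ → Bool) :=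
      fun S => {g | g (restrictTo ω S) = true} with ht
    have htc : ∀ S, IsClosed (t S) := by
      intro S
      have : t S = (fun g : FPC Γ → Bool => g (restrictTo ω S)) ⁻¹' {true} := by
        ext g; simp [ht]
      rw [this]
      exact (isClosed_discrete _).preimage (continuous_apply _)
    have hfip : ∀ u : Finset (Finset Γ), (K ∩ ⋂ S ∈ u, t S).Nonempty := by
      intro u
      set T : Finset Γ := u.sup id with hT
      have hV : IsOpen ((T : Set Γ).pi (fun γ => {ω γ})) :=
        isOpen_set_pi T.finite_toSet (fun _ _ => isOpen_discrete _)
      have hωV : ω ∈ (T : Set Γ).pi (fun γ => {ω γ}) := by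
        intro γ _; rfl
      obtain ⟨ω₀, hω₀V, hω₀C⟩ := mem_closure_iff.1 hω _ hV hωV
      obtain ⟨Ω₀, hΩ₀C, hω₀Ω₀⟩ := hω₀C
      refine ⟨fun φ => decide (φ ∈ FinOf Ω₀), ⟨Ω₀, hΩ₀C, fun φ => decide_eq_true_iff⟩, ?_⟩
      simp only [Set.mem_iInter]
      intro S hS
      have hST : (S : Set Γ) ⊆ (T : Set Γ) := Finset.coe_subset.2 (Finset.le_sup (f := id) hS)
      show decide (restrictTo ω S ∈ FinOf Ω₀) = true
      rw [decide_eq_true_iff]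
      refine ⟨ω₀, hω₀Ω₀, fun γ c hγc => ?_⟩
      simp only [restrictTo] at hγc
      by_cases hγ : γ ∈ S
      · rw [if_pos hγ] at hγc
        have := hω₀V γ (hST hγ)
        simp only [Set.mem_singleton_iff] at this
        rw [this]
        exact Option.some_inj.1 hγc
      · rw [if_neg hγ] at hγc; exact absurd hγc (by simp)
    obtain ⟨g, hgK, hg⟩ := hcompact.inter_iInter_nonempty t htc hfip
    obtain ⟨Ω, hΩC, hcode⟩ := hgK
    have hfin : ∀ S : Finset Γ, restrictTo ω S ∈ FinOf Ω := by
      intro S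
      apply (hcode _).1
      have := Set.mem_iInter.1 hg S
      exact this
    refine ⟨Ω, hΩC, ?_⟩
    have hΩclosed := (hC Ω hΩC).1
    rw [← hΩclosed.closure_eq]
    rw [mem_closure_iff]
    intro U hU hωU
    obtain ⟨I, v, hv, hsub⟩ := isOpen_pi_iff.1 hU ω hωU
    obtain ⟨ω', hω'Ω, hω'⟩ := hfin I
    refine ⟨ω', hsub ?_, hω'Ω⟩
    intro γ hγ
    have : ω' γ = ω γ := by
      apply hω' γ (ω γ)
      simp [restrictTo, Finset.mem_coe.1 hγ]
    rw [this]
    exact (hv γ hγ).2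
  refine ⟨hclosed, hclosed, ?_⟩
  rintro γ ω ⟨Ω, hΩC, hωΩ⟩
  exact ⟨Ω, hΩC, (hC Ω hΩC).2 γ ω hωΩ⟩

end DescColor
end

section
/- Let Γ be a countably infinite group with a proper right-invariant metric d, and let P be a Γ-ideal. If the shift action of Γ on ℕ^Γ admits a Baire measurable P-coloring (i.e., a Baire measurable Col(P)-coloring), then there is an extendable Γ-ideal P' ⊆ P with the join property. -/
open Set Function Topology

namespace DescColor

variable {Γ : Type*}

/-!
Fix a Baire measurable `f` whose coding map `ω ↦ (γ ↦ f (γ · ω))` lands in `Col(P)` on a comeager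
set. Say that a finite pattern `ψ` *forces* a finite partial coloring `φ` if the coding of a
generic `ω` in the cylinder of `ψ` extends `φ`, and let `P'` consist of the forced `φ`.
A generic point of a cylinder has its coding in `Col(P)`, so `P' ⊆ P`. Since `ω ↦ f (γ · ω)` is
Baire measurable, some value `c` is taken non-meagrely often on the cylinder of `ψ`, hence
generically on a smaller cylinder: this makes `P'` extendable. Finally let `R φ` be the least
radius around `dom φ` containing the domain of a pattern forcing `φ`; patterns forcing
`R`-separated colorings have disjoint domains, so their union forces the union of the colorings.
Right invariance of the metric makes `R` shift invariant.
-/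

theorem BaireMSet.baireMeasurableSet {X : Type*} [TopologicalSpace X] {s : Set X}
    (h : BaireMSet s) : BaireMeasurableSet s := by
  obtain ⟨U, hU, hsU⟩ := h
  refine BaireMeasurableSet.iff_residualEq_isOpen.2 ⟨U, hU, Filter.eventuallyEq_set.2 ?_⟩
  filter_upwards [hsU] with x hx
  rw [mem_compl_iff, mem_symmDiff] at hx
  tauto

theorem BaireMeasurableSet.exists_isOpen_subset_eventually {X : Type*} [TopologicalSpace X]
    {s U : Set X} (hs : BaireMeasurableSet s) (hU : IsOpen U) (h : ¬ IsMeagre (U ∩ s)) :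
    ∃ V, IsOpen V ∧ V.Nonempty ∧ V ⊆ U ∧ ∀ᶠ x in residual X, x ∈ V → x ∈ s := by
  obtain ⟨W, hW, hsW⟩ := hs.residualEq_isOpen
  have hsW' : ∀ᶠ x in residual X, x ∈ s ↔ x ∈ W := Filter.eventuallyEq_set.1 hsW
  refine ⟨U ∩ W, hU.inter hW, ?_, inter_subset_left, hsW'.mono fun x hx hxV => hx.2 hxV.2⟩
  by_contra hempty
  apply h
  filter_upwards [hsW'] with x hx ⟨hxU, hxs⟩
  exact hempty ⟨x, hxU, hx.1 hxs⟩

section Shift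

variable {Γ : Type*} [Group Γ]

theorem shift_mul (γ δ : Γ) (ω : Γ → ℕ) : shift γ (shift δ ω) = shift (γ * δ) ω := by
  funext ε
  simp [shift, mul_assoc]

theorem shift_one (ω : Γ → ℕ) : shift (1 : Γ) ω = ω := by
  funext ε
  simp [shift]

def shiftHomeomorph (γ : Γ) : (Γ → ℕ) ≃ₜ (Γ → ℕ) where
  toFun := shift γ
  invFun := shift γ⁻¹
  left_inv ω := by rw [shift_mul, inv_mul_cancel, shift_one]
  right_inv ω := by rw [shift_mul, mul_inv_cancel, shift_one]
  continuous_toFun := continuous_pi fun δ => continuous_apply (δ * γ)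
  continuous_invFun := continuous_pi fun δ => continuous_apply (δ * γ⁻¹)

theorem tendsto_shift_residual (γ : Γ) :
    Filter.Tendsto (shift γ) (residual (Γ → ℕ)) (residual (Γ → ℕ)) :=
  tendsto_residual_of_isOpenMap (shiftHomeomorph γ).continuous (shiftHomeomorph γ).isOpenMap

theorem shiftP_mul (γ δ : Γ) (φ : FPC Γ) : shiftP γ (shiftP δ φ) = shiftP (γ * δ) φ := by
  apply Subtype.ext
  funext ε
  simp [shiftP, mul_assoc]

theorem shiftP_one (φ : FPC Γ) : shiftP (1 : Γ) φ = φ := by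
  apply Subtype.ext
  funext ε
  simp [shiftP]

end Shift

section Cylinder

variable {Γ : Type*}

def cylP (ψ : FPC Γ) : Set (Γ → ℕ) := {ω | ∀ γ c, ψ.1 γ = some c → ω γ = c}

theorem isOpen_cylP (ψ : FPC Γ) : IsOpen (cylP ψ) := by
  have h : cylP ψ = ⋂ γ ∈ domP ψ, {ω : Γ → ℕ | ∀ c, ψ.1 γ = some c → ω γ = c} := by
    ext ω
    simp only [cylP, domP, mem_ofPred_eq, mem_iInter]
    exact ⟨fun h γ _ => h γ, fun h γ c hc => h γ (by simp [hc]) c hc⟩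
  rw [h]
  exact ψ.2.isOpen_biInter fun γ _ =>
    (continuous_apply (A := fun _ : Γ => ℕ) γ).isOpen_preimage
      {n | ∀ c, ψ.1 γ = some c → n = c} (isOpen_discrete _)

theorem cylP_nonempty (ψ : FPC Γ) : (cylP ψ).Nonempty :=
  ⟨fun γ => (ψ.1 γ).getD 0, fun γ c hc => by simp [hc]⟩

theorem exists_cylP_subset {U : Set (Γ → ℕ)} (hU : IsOpen U) (hne : U.Nonempty) :
    ∃ ψ : FPC Γ, cylP ψ ⊆ U := by
  classical
  obtain ⟨ω, hω⟩ := hne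
  obtain ⟨I, u, hu, hIU⟩ := isOpen_pi_iff.1 hU ω hω
  refine ⟨restrictTo ω I, fun ω' hω' => hIU fun γ hγ => ?_⟩
  rw [hω' γ (ω γ) (if_pos hγ)]
  exact (hu γ hγ).2

theorem cylP_eq_univ {φ : FPC Γ} (h : domP φ = ∅) : cylP φ = univ := by
  refine eq_univ_of_forall fun ω γ c hc => ?_
  have hγ : γ ∈ domP φ := by simp [domP, hc]
  simp [h] at hγ

theorem domP_emptyP : domP (emptyP Γ) = ∅ := by
  simp [domP, emptyP]

theorem cylP_subset_of_isRestrictionOf {ψ φ : FPC Γ} (h : IsRestrictionOf ψ φ) :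
    cylP φ ⊆ cylP ψ := by
  intro ω hω γ c hc
  rcases h γ with h | h
  · simp [h] at hc
  · exact hω γ c (h ▸ hc)

theorem mem_cylP_insertP [DecidableEq Γ] {φ : FPC Γ} {ω : Γ → ℕ} {γ : Γ} {c : ℕ}
    (hω : ω ∈ cylP φ) (hγ : ω γ = c) : ω ∈ cylP (insertP φ γ c) := by
  intro δ c' h
  by_cases hδ : δ = γ
  · subst hδ
    simp_all [insertP]
  · simp only [insertP, if_neg hδ] at h
    exact hω δ c' h

theorem domP_joinP (a b : FPC Γ) : domP (joinP a b) = domP a ∪ domP b := by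
  ext δ
  rcases h : a.1 δ with _ | c <;> simp [domP, joinP, h]

theorem cylP_joinP_subset_left (a b : FPC Γ) : cylP (joinP a b) ⊆ cylP a :=
  fun _ hω δ c hc => hω δ c (by simp [joinP, hc])

theorem cylP_joinP_subset_right {a b : FPC Γ} (hab : Disjoint (domP a) (domP b)) :
    cylP (joinP a b) ⊆ cylP b := by
  intro ω hω δ c hc
  have ha : a.1 δ = none := by
    by_contra ha
    exact disjoint_left.1 hab ha (show b.1 δ ≠ none by simp [hc])
  exact hω δ c (by simp [joinP, ha, hc])

theorem inter_subset_cylP_joinP (a b : FPC Γ) : cylP a ∩ cylP b ⊆ cylP (joinP a b) := by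
  rintro ω ⟨ha, hb⟩ δ c hc
  rcases h : a.1 δ with _ | c'
  · exact hb δ c (by simpa [joinP, h] using hc)
  · exact ha δ c (by simpa [joinP, h] using hc)

theorem mem_of_mem_colOf_of_mem_cylP [Group Γ] [DecidableEq Γ] {P : Set (FPC Γ)}
    (hP : IsGammaIdeal P) {ω : Γ → ℕ} {φ : FPC Γ} (hω : ω ∈ ColOf P) (hφ : ω ∈ cylP φ) :
    φ ∈ P := by
  refine hP.2 _ (hω φ.2.toFinset) φ fun δ => ?_
  rcases h : φ.1 δ with _ | c
  · exact Or.inl rfl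
  · right
    simp [restrictTo, h, hφ δ c h]

end Cylinder

section Forcing

variable {Γ : Type*} [Group Γ]

def shiftCoding (f : (Γ → ℕ) → ℕ) (ω : Γ → ℕ) : Γ → ℕ := fun γ => f (shift γ ω)

theorem shiftCoding_shift (f : (Γ → ℕ) → ℕ) (γ : Γ) (ω : Γ → ℕ) :
    shiftCoding f (shift γ ω) = shift γ (shiftCoding f ω) := by
  funext δ
  simp [shiftCoding, shift_mul, shift]

theorem cylP_shiftP (γ : Γ) (ψ : FPC Γ) : cylP (shiftP γ ψ) = shift γ⁻¹ ⁻¹' cylP ψ := by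
  ext ω
  constructor
  · intro h δ c hc
    simpa [shift] using h (δ * γ⁻¹) c (by simpa [shiftP] using hc)
  · intro h δ c hc
    simpa [shift, mul_assoc] using h (δ * γ) c hc

def Forces (f : (Γ → ℕ) → ℕ) (ψ φ : FPC Γ) : Prop :=
  ∀ᶠ ω in residual (Γ → ℕ), ω ∈ cylP ψ → shiftCoding f ω ∈ cylP φ

variable {f : (Γ → ℕ) → ℕ}

theorem forces_of_domP_eq_empty {φ : FPC Γ} (h : domP φ = ∅) (ψ : FPC Γ) : Forces f ψ φ :=
  Filter.Eventually.of_forall fun ω _ => by simp [cylP_eq_univ h]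

theorem Forces.mono {ψ φ φ' : FPC Γ} (h : Forces f ψ φ) (hφ : cylP φ ⊆ cylP φ') :
    Forces f ψ φ' :=
  Filter.Eventually.mono h fun _ hω hψ => hφ (hω hψ)

theorem Forces.shift {ψ φ : FPC Γ} (h : Forces f ψ φ) (γ : Γ) :
    Forces f (shiftP γ ψ) (shiftP γ φ) := by
  filter_upwards [(tendsto_shift_residual γ⁻¹).eventually h] with ω hω hψ
  rw [cylP_shiftP] at hψ ⊢
  simpa [mem_preimage, shiftCoding_shift] using hω hψ

theorem Forces.join {ψ₁ ψ₂ φ₁ φ₂ : FPC Γ} (h₁ : Forces f ψ₁ φ₁) (h₂ : Forces f ψ₂ φ₂)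
    (hψ : Disjoint (domP ψ₁) (domP ψ₂)) : Forces f (joinP ψ₁ ψ₂) (joinP φ₁ φ₂) := by
  filter_upwards [h₁, h₂] with ω hω₁ hω₂ hψω
  exact inter_subset_cylP_joinP _ _
    ⟨hω₁ (cylP_joinP_subset_left _ _ hψω), hω₂ (cylP_joinP_subset_right hψ hψω)⟩

variable (f) in
def forcedIdeal : Set (FPC Γ) := {φ | ∃ ψ, Forces f ψ φ}

variable (f) in
theorem isGammaIdeal_forcedIdeal : IsGammaIdeal (forcedIdeal f) :=
  ⟨fun γ _ ⟨ψ, hψ⟩ => ⟨shiftP γ ψ, hψ.shift γ⟩,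
    fun _ ⟨ψ, hψ⟩ _ hφ => ⟨ψ, hψ.mono (cylP_subset_of_isRestrictionOf hφ)⟩⟩

theorem forcedIdeal_subset [Countable Γ] [DecidableEq Γ] {P : Set (FPC Γ)}
    (hP : IsGammaIdeal P) (hf : {ω | shiftCoding f ω ∈ ColOf P} ∈ residual (Γ → ℕ)) :
    forcedIdeal f ⊆ P := by
  rintro φ ⟨ψ, hψ⟩
  obtain ⟨ω, hωψ, hforce, hcol⟩ := (dense_of_mem_residual (hψ.and hf)).inter_open_nonempty
    _ (isOpen_cylP ψ) (cylP_nonempty ψ)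
  exact mem_of_mem_colOf_of_mem_cylP hP hcol (hforce hωψ)

theorem isExtendable_forcedIdeal [Countable Γ] [DecidableEq Γ] (hf : BaireMFun f) :
    IsExtendable (forcedIdeal f) := by
  rintro φ ⟨ψ, hψ⟩ γ -
  obtain ⟨c, hc⟩ : ∃ c, ¬ IsMeagre (cylP ψ ∩ {ω | f (shift γ ω) = c}) := by
    by_contra! h
    refine not_isMeagre_of_isOpen (isOpen_cylP ψ) (cylP_nonempty ψ) ((isMeagre_iUnion h).mono ?_)
    exact fun ω hω => mem_iUnion.2 ⟨_, hω, rfl⟩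
  have hfc : BaireMeasurableSet {ω | f (shift γ ω) = c} :=
    (hf {c} (measurableSet_singleton c)).baireMeasurableSet.preimage
      (shiftHomeomorph γ).continuous (shiftHomeomorph γ).isOpenMap
  obtain ⟨V, hV, hVne, hVψ, hVc⟩ :=
    BaireMeasurableSet.exists_isOpen_subset_eventually hfc (isOpen_cylP ψ) hc
  obtain ⟨ψ', hψ'⟩ := exists_cylP_subset hV hVne
  refine ⟨c, ψ', ?_⟩
  filter_upwards [hψ, hVc] with ω hωφ hωc hω
  exact mem_cylP_insertP (hωφ (hVψ (hψ' hω))) (hωc (hψ' hω))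

section Radius

variable [MetricSpace Γ]

variable (f) in
def forcingRadii (φ : FPC Γ) : Set ℕ :=
  {n | ∃ ψ, Forces f ψ φ ∧ ∀ δ ∈ domP ψ, ∃ γ ∈ domP φ, dist γ δ ≤ n}

variable (f) in
noncomputable def forcingRadius (φ : FPC Γ) : ℕ := sInf (forcingRadii f φ)

theorem forcingRadii_nonempty {φ : FPC Γ} (h : φ ∈ forcedIdeal f) :
    (forcingRadii f φ).Nonempty := by
  rcases (domP φ).eq_empty_or_nonempty with hφ | ⟨γ₀, hγ₀⟩
  · exact ⟨0, emptyP Γ, forces_of_domP_eq_empty hφ _, by simp [domP_emptyP]⟩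
  · obtain ⟨ψ, hψ⟩ := h
    obtain ⟨r, hr⟩ := (ψ.2.image (dist γ₀)).bddAbove
    exact ⟨⌈r⌉₊, ψ, hψ, fun δ hδ =>
      ⟨γ₀, hγ₀, (hr (mem_image_of_mem _ hδ)).trans (Nat.le_ceil r)⟩⟩

theorem exists_forces_dist_le_forcingRadius {φ : FPC Γ} (h : φ ∈ forcedIdeal f) :
    ∃ ψ, Forces f ψ φ ∧ ∀ δ ∈ domP ψ, ∃ γ ∈ domP φ, dist γ δ ≤ forcingRadius f φ :=
  Nat.sInf_mem (forcingRadii_nonempty h)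

theorem mem_forcingRadii_shiftP (hinv : ∀ γ δ g : Γ, dist (γ * g) (δ * g) = dist γ δ)
    (γ : Γ) {φ : FPC Γ} {n : ℕ} (h : n ∈ forcingRadii f φ) :
    n ∈ forcingRadii f (shiftP γ φ) := by
  obtain ⟨ψ, hψ, hdist⟩ := h
  refine ⟨shiftP γ ψ, hψ.shift γ, fun δ hδ => ?_⟩
  obtain ⟨ε, hε, hεδ⟩ := hdist (δ * γ) hδ
  refine ⟨ε * γ⁻¹, by simpa [domP, shiftP] using hε, ?_⟩
  rwa [← hinv _ _ γ, inv_mul_cancel_right]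

theorem forcingRadius_shiftP (hinv : ∀ γ δ g : Γ, dist (γ * g) (δ * g) = dist γ δ)
    (γ : Γ) (φ : FPC Γ) : forcingRadius f (shiftP γ φ) = forcingRadius f φ := by
  refine congrArg sInf (Subset.antisymm (fun n hn => ?_) fun _ => mem_forcingRadii_shiftP hinv γ)
  simpa [shiftP_mul, shiftP_one] using mem_forcingRadii_shiftP hinv γ⁻¹ hn

theorem exists_forces_joinList {l : List (FPC Γ)} (hl : ∀ φ ∈ l, φ ∈ forcedIdeal f)
    (hsep : l.Pairwise (RSeparated fun φ => (forcingRadius f φ : ℝ))) :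
    ∃ ψ, Forces f ψ (joinList l) ∧
      ∀ δ ∈ domP ψ, ∃ φ ∈ l, ∃ γ ∈ domP φ, dist γ δ ≤ forcingRadius f φ := by
  induction l with
  | nil => exact ⟨emptyP Γ, forces_of_domP_eq_empty domP_emptyP _, by simp [domP_emptyP]⟩
  | cons a t ih =>
    rw [List.pairwise_cons] at hsep
    obtain ⟨ψa, hψa, hdista⟩ := exists_forces_dist_le_forcingRadius (hl a List.mem_cons_self)
    obtain ⟨ψt, hψt, hdistt⟩ := ih (fun φ hφ => hl φ (List.mem_cons_of_mem _ hφ)) hsep.2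
    have hdisj : Disjoint (domP ψa) (domP ψt) := by
      refine disjoint_left.2 fun δ hδa hδt => ?_
      obtain ⟨γ, hγ, hγδ⟩ := hdista δ hδa
      obtain ⟨φ, hφ, γ', hγ', hγ'δ⟩ := hdistt δ hδt
      linarith [hsep.1 φ hφ γ hγ γ' hγ', dist_triangle_right γ γ' δ]
    refine ⟨joinP ψa ψt, hψa.join hψt hdisj, ?_⟩
    rw [domP_joinP]
    rintro δ (hδ | hδ)
    · obtain ⟨γ, hγ, hγδ⟩ := hdista δ hδ
      exact ⟨a, List.mem_cons_self, γ, hγ, hγδ⟩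
    · obtain ⟨φ, hφ, γ, hγ, hγδ⟩ := hdistt δ hδ
      exact ⟨φ, List.mem_cons_of_mem _ hφ, γ, hγ, hγδ⟩

theorem hasJoinProperty_forcedIdeal (hinv : ∀ γ δ g : Γ, dist (γ * g) (δ * g) = dist γ δ) :
    HasJoinProperty (forcedIdeal f) := by
  refine ⟨fun φ => forcingRadius f φ, fun φ => Nat.cast_nonneg _,
    fun γ φ _ => by simp only [forcingRadius_shiftP hinv], fun l hl hsep => ?_⟩
  obtain ⟨ψ, hψ, -⟩ := exists_forces_joinList hl hsep
  exact ⟨ψ, hψ⟩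

end Radius

end Forcing

theorem stmt14_general {Γ : Type*} [Group Γ] [Countable Γ] [DecidableEq Γ]
    [MetricSpace Γ]
    (hinv : ∀ γ δ g : Γ, dist (γ * g) (δ * g) = dist γ δ)
    (P : Set (FPC Γ)) (hP : IsGammaIdeal P)
    (hcol : ShiftHasBMColoring Γ (ColOf P)) :
    ∃ P' : Set (FPC Γ), P' ⊆ P ∧ IsGammaIdeal P' ∧ IsExtendable P' ∧
      HasJoinProperty P' := by
  obtain ⟨f, hf, hres⟩ := hcol
  exact ⟨forcedIdeal f, forcedIdeal_subset hP hres, isGammaIdeal_forcedIdeal f,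
    isExtendable_forcedIdeal hf, hasJoinProperty_forcedIdeal hinv⟩

/-- If the shift action admits a Baire measurable `P`-coloring, then `P` contains an
extendable `Γ`-ideal with the join property. -/
theorem stmt14 {Γ : Type*} [Group Γ] [Countable Γ] [Infinite Γ] [DecidableEq Γ]
    [MetricSpace Γ]
    (hinv : ∀ γ δ g : Γ, dist (γ * g) (δ * g) = dist γ δ)
    (hproper : ∀ (γ : Γ) (r : ℝ), (Metric.closedBall γ r).Finite)
    (P : Set (FPC Γ)) (hP : IsGammaIdeal P)
    (hcol : ShiftHasBMColoring Γ (ColOf P)) :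
    ∃ P' : Set (FPC Γ), P' ⊆ P ∧ IsGammaIdeal P' ∧ IsExtendable P' ∧
      HasJoinProperty P' :=
  stmt14_general hinv P hP hcol

end DescColor
end

section
/- Let Γ be a countably infinite group with a proper right-invariant metric d. Every extendable Γ-ideal with the join property is reducible to a local extendable Γ-ideal: if P is an extendable Γ-ideal with the join property, then there exist a local extendable Γ-ideal P' and a map ρ : ℕ → ℕ such that ρ ∘ φ ∈ P for every φ ∈ P'. -/
open Set Function Topology

namespace DescColor

variable {Γ : Type*}

/-!
Enumerate all pairs `(k, π)` of a radius `k ∈ ℕ` and a finite partial colouring `π` by the natural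
numbers. A point `γ` of colour `n ↔ (k, π)` *claims* the translate of `π` that puts `π 1` at `γ`,
and `ρ n = π 1`. A colouring lies in `P'` when every claimed pattern is in `P`, lies within its
radius `k` of the claiming point and has `R`-value at most `k`, and any two claims made from points
at distance at most `4k` (`k` the larger radius) are nested or separated by more than the sum of
their radii. This only inspects the ball of radius `4k` around each point, so `P'` is local. Claims
from points further apart are separated by the triangle inequality, so the maximal claims of
`φ ∈ P'` are pairwise `R`-separated and their union `J` lies in `P` by the join property. `J`
contains every claim, hence `ρ ∘ φ`. To extend `φ` at `γ`, extend `J` at `γ` inside `P` and give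
`γ` a colour claiming this extension with a large radius: every old claim is nested in the new one.
-/

theorem FPC.ext {φ ψ : FPC Γ} (h : ∀ δ, φ.1 δ = ψ.1 δ) : φ = ψ :=
  Subtype.ext (funext h)

theorem mem_domP {φ : FPC Γ} {δ : Γ} : δ ∈ domP φ ↔ φ.1 δ ≠ none := Iff.rfl

theorem finite_graph (φ : FPC Γ) : {x : Γ × ℕ | φ.1 x.1 = some x.2}.Finite :=
  (φ.2.image fun γ => (γ, (φ.1 γ).getD 0)).subset fun ⟨γ, c⟩ h =>
    ⟨γ, by simp_all, by simp_all⟩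

instance FPC.countable [Countable Γ] : Countable (FPC Γ) := by
  classical
  refine Function.Injective.countable (f := fun φ : FPC Γ => (finite_graph φ).toFinset) ?_
  intro φ ψ h
  refine FPC.ext fun δ => Option.ext fun c => ?_
  simpa using congrArg (fun s => (δ, c) ∈ s) h

theorem isRestrictionOf_iff {ψ φ : FPC Γ} :
    IsRestrictionOf ψ φ ↔ ∀ δ c, ψ.1 δ = some c → φ.1 δ = some c := by
  refine ⟨fun h δ c hδ => ?_, fun h δ => ?_⟩
  · rcases h δ with h | h <;> simp_all
  · cases hδ : ψ.1 δ with
    | none => exact Or.inl rfl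
    | some c => exact Or.inr (h δ c hδ).symm

theorem IsRestrictionOf.apply_eq_some {ψ φ : FPC Γ} (h : IsRestrictionOf ψ φ) {δ : Γ} {c : ℕ}
    (hδ : ψ.1 δ = some c) : φ.1 δ = some c :=
  isRestrictionOf_iff.1 h δ c hδ

theorem IsRestrictionOf.refl (φ : FPC Γ) : IsRestrictionOf φ φ := fun _ => Or.inr rfl

theorem IsRestrictionOf.trans {χ ψ φ : FPC Γ} (h₁ : IsRestrictionOf χ ψ)
    (h₂ : IsRestrictionOf ψ φ) : IsRestrictionOf χ φ :=
  isRestrictionOf_iff.2 fun _ _ hδ => h₂.apply_eq_some (h₁.apply_eq_some hδ)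

theorem IsRestrictionOf.domP_subset {ψ φ : FPC Γ} (h : IsRestrictionOf ψ φ) :
    domP ψ ⊆ domP φ := fun δ hδ => by
  obtain ⟨c, hc⟩ := Option.ne_none_iff_exists'.1 hδ
  simp [mem_domP, h.apply_eq_some hc]

theorem IsRestrictionOf.eq_of_domP_subset {ψ φ : FPC Γ} (h : IsRestrictionOf ψ φ)
    (hd : domP φ ⊆ domP ψ) : ψ = φ := by
  refine FPC.ext fun δ => (h δ).elim (fun hψ => ?_) id
  have hφ : φ.1 δ = none := by
    by_contra hφ
    exact hd hφ hψ
  rw [hψ, hφ]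

theorem IsRestrictionOf.shiftP [Group Γ] {ψ φ : FPC Γ} (g : Γ) (h : IsRestrictionOf ψ φ) :
    IsRestrictionOf (shiftP g ψ) (shiftP g φ) := fun δ => h (δ * g)

theorem restrictBall_apply_of_dist_le [MetricSpace Γ] {φ : FPC Γ} {γ δ : Γ} {r : ℝ}
    (h : dist γ δ ≤ r) :
    (restrictBall φ γ r).1 δ = φ.1 δ := if_pos h

theorem restrictBall_isRestrictionOf [MetricSpace Γ] (φ : FPC Γ) (γ : Γ) (r : ℝ) :
    IsRestrictionOf (restrictBall φ γ r) φ := fun δ => by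
  by_cases h : dist γ δ ≤ r
  · exact Or.inr (if_pos h)
  · exact Or.inl (if_neg h)

theorem insertP_apply [DecidableEq Γ] (φ : FPC Γ) (γ : Γ) (c : ℕ) (δ : Γ) :
    (insertP φ γ c).1 δ = if δ = γ then some c else φ.1 δ := rfl

theorem IsExtendable.exists_isRestrictionOf_mem_domP [DecidableEq Γ] {P : Set (FPC Γ)}
    (hext : IsExtendable P) {J : FPC Γ} (hJ : J ∈ P) (γ : Γ) :
    ∃ K ∈ P, IsRestrictionOf J K ∧ γ ∈ domP K := by
  by_cases hγ : J.1 γ = none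
  · obtain ⟨c, hc⟩ := hext J hJ γ hγ
    refine ⟨_, hc, fun δ => ?_, by simp [mem_domP, insertP_apply]⟩
    by_cases hδ : δ = γ
    · exact Or.inl (hδ ▸ hγ)
    · exact Or.inr (by simp [insertP_apply, hδ])
  · exact ⟨J, hJ, .refl J, hγ⟩

theorem exists_maximal_restriction {S : Set (FPC Γ)} (hS : S.Finite) {φ : FPC Γ} (hφ : φ ∈ S) :
    ∃ Z ∈ S, IsRestrictionOf φ Z ∧ ∀ Y ∈ S, IsRestrictionOf Z Y → Z = Y := by
  obtain ⟨Z, ⟨hZS, hφZ⟩, hmax⟩ := (hS.subset (sep_subset _ _)).exists_maximalFor domP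
    {Y ∈ S | IsRestrictionOf φ Y} ⟨φ, hφ, .refl φ⟩
  exact ⟨Z, hZS, hφZ, fun Y hY hZY =>
    hZY.eq_of_domP_subset (hmax ⟨hY, hφZ.trans hZY⟩ hZY.domP_subset)⟩

theorem joinP_apply_of_eq_none {φ ψ : FPC Γ} {δ : Γ} (h : φ.1 δ = none) :
    (joinP φ ψ).1 δ = ψ.1 δ := by
  show (match φ.1 δ with | some c => some c | none => ψ.1 δ) = ψ.1 δ
  rw [h]

theorem isRestrictionOf_joinP_left (φ ψ : FPC Γ) : IsRestrictionOf φ (joinP φ ψ) :=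
  isRestrictionOf_iff.2 fun δ c hδ => by
    show (match φ.1 δ with | some c => some c | none => ψ.1 δ) = some c
    rw [hδ]

theorem isRestrictionOf_joinList {l : List (FPC Γ)}
    (hl : l.Pairwise fun φ ψ => Disjoint (domP φ) (domP ψ)) {φ : FPC Γ} (hφ : φ ∈ l) :
    IsRestrictionOf φ (joinList l) := by
  induction l with
  | nil => simp at hφ
  | cons x xs ih =>
    rw [List.pairwise_cons] at hl
    rcases List.mem_cons.1 hφ with rfl | hφ
    · exact isRestrictionOf_joinP_left _ _
    · refine isRestrictionOf_iff.2 fun δ c hδ => ?_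
      have hx : x.1 δ = none :=
        not_not.1 (Set.disjoint_right.1 (hl.1 φ hφ) (show δ ∈ domP φ by simp [mem_domP, hδ]))
      exact (joinP_apply_of_eq_none hx).trans ((ih hl.2 hφ).apply_eq_some hδ)

section Separation

variable [MetricSpace Γ]

/-- `RSeparated R φ ψ` is `DomSeparated (R φ + R ψ) φ ψ`. -/
def DomSeparated (r : ℝ) (φ ψ : FPC Γ) : Prop :=
  ∀ a ∈ domP φ, ∀ b ∈ domP ψ, r < dist a b

def NestedOrSeparated (r : ℝ) (φ ψ : FPC Γ) : Prop :=
  IsRestrictionOf φ ψ ∨ IsRestrictionOf ψ φ ∨ DomSeparated r φ ψ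

theorem NestedOrSeparated.symm {r : ℝ} {φ ψ : FPC Γ} (h : NestedOrSeparated r φ ψ) :
    NestedOrSeparated r ψ φ := by
  rcases h with h | h | h
  · exact Or.inr (Or.inl h)
  · exact Or.inl h
  · exact Or.inr (Or.inr fun a ha b hb => dist_comm a b ▸ h b hb a ha)

theorem NestedOrSeparated.mono {r r' : ℝ} {φ ψ : FPC Γ} (h : NestedOrSeparated r φ ψ)
    (hr : r' ≤ r) : NestedOrSeparated r' φ ψ := by
  rcases h with h | h | h
  · exact Or.inl h
  · exact Or.inr (Or.inl h)
  · exact Or.inr (Or.inr fun a ha b hb => hr.trans_lt (h a ha b hb))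

theorem NestedOrSeparated.shiftP [Group Γ] (hinv : ∀ γ δ g : Γ, dist (γ * g) (δ * g) = dist γ δ)
    {r : ℝ} {φ ψ : FPC Γ} (g : Γ) (h : NestedOrSeparated r φ ψ) :
    NestedOrSeparated r (shiftP g φ) (shiftP g ψ) := by
  rcases h with h | h | h
  · exact Or.inl (h.shiftP g)
  · exact Or.inr (Or.inl (h.shiftP g))
  · exact Or.inr (Or.inr fun a ha b hb => hinv a b g ▸ h (a * g) ha (b * g) hb)

theorem RSeparated.disjoint_domP {R : FPC Γ → ℝ} (hR0 : ∀ φ, 0 ≤ R φ) {φ ψ : FPC Γ}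
    (h : RSeparated R φ ψ) : Disjoint (domP φ) (domP ψ) :=
  Set.disjoint_left.2 fun δ hφ hψ => by
    have := h δ hφ δ hψ
    rw [dist_self] at this
    linarith [hR0 φ, hR0 ψ]

theorem exists_mem_forall_isRestrictionOf_of_nestedOrSeparated {P : Set (FPC Γ)}
    {R : FPC Γ → ℝ} (hR0 : ∀ φ, 0 ≤ R φ)
    (hjoin : ∀ l : List (FPC Γ), (∀ φ ∈ l, φ ∈ P) → l.Pairwise (RSeparated R) → joinList l ∈ P)
    {S : Set (FPC Γ)} (hS : S.Finite) (hSP : S ⊆ P)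
    (hnest : ∀ φ ∈ S, ∀ ψ ∈ S, NestedOrSeparated (R φ + R ψ) φ ψ) :
    ∃ J ∈ P, ∀ φ ∈ S, IsRestrictionOf φ J := by
  classical
  have hM : {Z ∈ S | ∀ Y ∈ S, IsRestrictionOf Z Y → Z = Y}.Finite := hS.subset (sep_subset _ _)
  have hmem : ∀ Z, Z ∈ hM.toFinset.toList ↔ Z ∈ S ∧ ∀ Y ∈ S, IsRestrictionOf Z Y → Z = Y := by
    simp
  have hsep : hM.toFinset.toList.Pairwise (RSeparated R) := by
    refine (Finset.nodup_toList _).pairwise_of_forall_ne fun Z hZ Z' hZ' hne => ?_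
    rw [hmem] at hZ hZ'
    rcases hnest Z hZ.1 Z' hZ'.1 with h | h | h
    · exact absurd (hZ.2 Z' hZ'.1 h) hne
    · exact absurd (hZ'.2 Z hZ.1 h).symm hne
    · exact h
  refine ⟨_, hjoin _ (fun Z hZ => hSP ((hmem Z).1 hZ).1) hsep, fun φ hφ => ?_⟩
  obtain ⟨Z, hZS, hφZ, hZmax⟩ := exists_maximal_restriction hS hφ
  exact hφZ.trans <| isRestrictionOf_joinList (hsep.imp (RSeparated.disjoint_domP hR0))
    ((hmem Z).2 ⟨hZS, hZmax⟩)

end Separation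

section Coding

variable [Group Γ]

theorem shiftP_shiftP (a b : Γ) (φ : FPC Γ) : shiftP a (shiftP b φ) = shiftP (a * b) φ :=
  FPC.ext fun δ => show φ.1 (δ * a * b) = φ.1 (δ * (a * b)) by rw [mul_assoc]

variable (E : ℕ → ℕ × FPC Γ)

def colorRadius (n : ℕ) : ℕ := (E n).1

def colorPattern (n : ℕ) : FPC Γ := (E n).2

def decodeColor (n : ℕ) : ℕ := ((colorPattern E n).1 1).getD 0

def claim (γ : Γ) (n : ℕ) : FPC Γ := shiftP γ⁻¹ (colorPattern E n)

theorem shiftP_claim (g γ : Γ) (n : ℕ) : shiftP g (claim E (γ * g) n) = claim E γ n := by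
  rw [claim, claim, shiftP_shiftP, mul_inv_rev, mul_inv_cancel_left]

variable [MetricSpace Γ] (P : Set (FPC Γ)) (R : FPC Γ → ℝ)

def IsValidColor (n : ℕ) : Prop :=
  (colorPattern E n).1 1 ≠ none ∧
    (∀ x ∈ domP (colorPattern E n), dist 1 x ≤ colorRadius E n) ∧
    colorPattern E n ∈ P ∧ R (colorPattern E n) ≤ colorRadius E n

def localIdeal : Set (FPC Γ) :=
  {φ | ∀ γ n, φ.1 γ = some n → IsValidColor E P R n ∧
    ∀ p m, φ.1 p = some m → colorRadius E m ≤ colorRadius E n →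
      dist γ p ≤ 4 * (colorRadius E n : ℝ) →
      NestedOrSeparated (colorRadius E n + colorRadius E m) (claim E γ n) (claim E p m)}

variable {E P R}

theorem IsValidColor.claim_apply_self {n : ℕ} (hn : IsValidColor E P R n) (γ : Γ) :
    (claim E γ n).1 γ = some (decodeColor E n) := by
  obtain ⟨c, hc⟩ := Option.ne_none_iff_exists'.1 hn.1
  show (colorPattern E n).1 (γ * γ⁻¹) = _
  simp [decodeColor, hc]

theorem IsValidColor.dist_le_of_mem_domP_claim
    (hinv : ∀ γ δ g : Γ, dist (γ * g) (δ * g) = dist γ δ) {n : ℕ} (hn : IsValidColor E P R n)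
    {γ a : Γ} (ha : a ∈ domP (claim E γ n)) : dist γ a ≤ colorRadius E n := by
  have h := hn.2.1 (a * γ⁻¹) ha
  rwa [← hinv 1 (a * γ⁻¹) γ, one_mul, inv_mul_cancel_right] at h

theorem IsValidColor.claim_mem (hP : IsGammaIdeal P) {n : ℕ} (hn : IsValidColor E P R n) (γ : Γ) :
    claim E γ n ∈ P :=
  hP.1 γ⁻¹ _ hn.2.2.1

theorem IsValidColor.R_claim_le (hRinv : ∀ (γ : Γ), ∀ φ ∈ P, R (shiftP γ φ) = R φ) {n : ℕ}
    (hn : IsValidColor E P R n) (γ : Γ) : R (claim E γ n) ≤ colorRadius E n := by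
  rw [claim, hRinv γ⁻¹ _ hn.2.2.1]
  exact hn.2.2.2

theorem exists_isValidColor_claim_eq (hE : Surjective E)
    (hinv : ∀ γ δ g : Γ, dist (γ * g) (δ * g) = dist γ δ) (hP : IsGammaIdeal P) {K : FPC Γ}
    (hK : K ∈ P) {γ : Γ} (hγ : γ ∈ domP K) : ∃ n, IsValidColor E P R n ∧ claim E γ n = K := by
  obtain ⟨b, hb⟩ := (K.2.image (dist γ)).bddAbove
  obtain ⟨n, hn⟩ := hE (⌈max b (R (shiftP γ K))⌉₊, shiftP γ K)
  have hk : max b (R (shiftP γ K)) ≤ colorRadius E n := by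
    rw [colorRadius, hn]
    exact Nat.le_ceil _
  have hpat : colorPattern E n = shiftP γ K := by rw [colorPattern, hn]
  refine ⟨n, ⟨?_, fun x hx => ?_, ?_, ?_⟩, ?_⟩
  · rw [hpat]
    simpa [shiftP, mem_domP] using hγ
  · rw [hpat] at hx
    rw [← hinv 1 x γ, one_mul]
    exact (hb ⟨x * γ, hx, rfl⟩).trans ((le_max_left _ _).trans hk)
  · rw [hpat]
    exact hP.1 γ K hK
  · rw [hpat]
    exact (le_max_right _ _).trans hk
  · rw [claim, hpat, shiftP_shiftP, inv_mul_cancel]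
    exact FPC.ext fun δ => congrArg K.1 (mul_one δ)

theorem mem_localIdeal_of_isRestrictionOf {ψ φ : FPC Γ} (hφ : φ ∈ localIdeal E P R)
    (h : IsRestrictionOf ψ φ) : ψ ∈ localIdeal E P R := fun γ n hγ =>
  ⟨(hφ γ n (h.apply_eq_some hγ)).1,
    fun p m hp => (hφ γ n (h.apply_eq_some hγ)).2 p m (h.apply_eq_some hp)⟩

theorem shiftP_mem_localIdeal (hinv : ∀ γ δ g : Γ, dist (γ * g) (δ * g) = dist γ δ) (g : Γ)
    {φ : FPC Γ} (hφ : φ ∈ localIdeal E P R) : shiftP g φ ∈ localIdeal E P R := by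
  intro γ n hγ
  refine ⟨(hφ (γ * g) n hγ).1, fun p m hp hk hd => ?_⟩
  rw [← hinv γ p g] at hd
  rw [← shiftP_claim E g γ, ← shiftP_claim E g p]
  exact ((hφ (γ * g) n hγ).2 (p * g) m hp hk hd).shiftP hinv g

theorem isGammaIdeal_localIdeal (hinv : ∀ γ δ g : Γ, dist (γ * g) (δ * g) = dist γ δ) :
    IsGammaIdeal (localIdeal E P R) :=
  ⟨fun g _ hφ => shiftP_mem_localIdeal hinv g hφ,
    fun _ hφ _ h => mem_localIdeal_of_isRestrictionOf hφ h⟩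

theorem localIdeal_eq_locallyIn :
    localIdeal E P R = LocallyIn (localIdeal E P R) fun n => 4 * (colorRadius E n : ℝ) := by
  refine Subset.antisymm (fun φ hφ γ n _ =>
    mem_localIdeal_of_isRestrictionOf hφ (restrictBall_isRestrictionOf φ γ _)) ?_
  intro φ hφ γ n hγ
  have hγ' : (restrictBall φ γ (4 * colorRadius E n)).1 γ = some n := by
    rw [restrictBall_apply_of_dist_le (by simp)]
    exact hγ
  obtain ⟨hn, hnest⟩ := hφ γ n hγ γ n hγ'
  exact ⟨hn, fun p m hp hk hd => hnest p m (by rwa [restrictBall_apply_of_dist_le hd]) hk hd⟩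

theorem nestedOrSeparated_claim_claim (hinv : ∀ γ δ g : Γ, dist (γ * g) (δ * g) = dist γ δ)
    {φ : FPC Γ} (hφ : φ ∈ localIdeal E P R) {q q' : Γ} {m m' : ℕ} (hq : φ.1 q = some m)
    (hq' : φ.1 q' = some m') :
    NestedOrSeparated (colorRadius E m + colorRadius E m') (claim E q m) (claim E q' m') := by
  wlog hk : colorRadius E m' ≤ colorRadius E m generalizing q q' m m'
  · rw [add_comm]
    exact (this hq' hq (le_of_not_ge hk)).symm
  by_cases hd : dist q q' ≤ 4 * (colorRadius E m : ℝ)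
  · exact (hφ q m hq).2 q' m' hq' hk hd
  · refine Or.inr (Or.inr fun a ha b hb => ?_)
    have ha' := (hφ q m hq).1.dist_le_of_mem_domP_claim hinv ha
    have hb' := (hφ q' m' hq').1.dist_le_of_mem_domP_claim hinv hb
    have hk' : (colorRadius E m' : ℝ) ≤ colorRadius E m := by exact_mod_cast hk
    have htri := dist_triangle4 q a b q'
    rw [dist_comm b q'] at htri
    linarith

theorem exists_mem_forall_claim_isRestrictionOf
    (hinv : ∀ γ δ g : Γ, dist (γ * g) (δ * g) = dist γ δ) (hP : IsGammaIdeal P)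
    (hR0 : ∀ φ, 0 ≤ R φ) (hRinv : ∀ (γ : Γ), ∀ φ ∈ P, R (shiftP γ φ) = R φ)
    (hjoin : ∀ l : List (FPC Γ), (∀ φ ∈ l, φ ∈ P) → l.Pairwise (RSeparated R) → joinList l ∈ P)
    {φ : FPC Γ} (hφ : φ ∈ localIdeal E P R) :
    ∃ J ∈ P, ∀ p m, φ.1 p = some m → IsRestrictionOf (claim E p m) J := by
  let S := (fun x : Γ × ℕ => claim E x.1 x.2) '' {x | φ.1 x.1 = some x.2}
  have hSP : S ⊆ P := by
    rintro _ ⟨⟨p, m⟩, hp, rfl⟩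
    exact (hφ p m hp).1.claim_mem hP p
  have hnest : ∀ ψ ∈ S, ∀ χ ∈ S, NestedOrSeparated (R ψ + R χ) ψ χ := by
    rintro _ ⟨⟨q, m⟩, hq, rfl⟩ _ ⟨⟨q', m'⟩, hq', rfl⟩
    exact (nestedOrSeparated_claim_claim hinv hφ hq hq').mono
      (add_le_add ((hφ q m hq).1.R_claim_le hRinv q) ((hφ q' m' hq').1.R_claim_le hRinv q'))
  obtain ⟨J, hJP, hJ⟩ := exists_mem_forall_isRestrictionOf_of_nestedOrSeparated hR0 hjoin
    ((finite_graph φ).image _) hSP hnest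
  exact ⟨J, hJP, fun p m hp => hJ _ ⟨(p, m), hp, rfl⟩⟩

theorem mapP_decodeColor_mem (hinv : ∀ γ δ g : Γ, dist (γ * g) (δ * g) = dist γ δ)
    (hP : IsGammaIdeal P) (hR0 : ∀ φ, 0 ≤ R φ)
    (hRinv : ∀ (γ : Γ), ∀ φ ∈ P, R (shiftP γ φ) = R φ)
    (hjoin : ∀ l : List (FPC Γ), (∀ φ ∈ l, φ ∈ P) → l.Pairwise (RSeparated R) → joinList l ∈ P)
    {φ : FPC Γ} (hφ : φ ∈ localIdeal E P R) : mapP (decodeColor E) φ ∈ P := by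
  obtain ⟨J, hJP, hJ⟩ := exists_mem_forall_claim_isRestrictionOf hinv hP hR0 hRinv hjoin hφ
  refine hP.2 J hJP _ (isRestrictionOf_iff.2 fun δ c hδ => ?_)
  obtain ⟨n, hn, rfl⟩ := Option.map_eq_some_iff.1 hδ
  exact (hJ δ n hn).apply_eq_some ((hφ δ n hn).1.claim_apply_self δ)

theorem insertP_mem_localIdeal [DecidableEq Γ] {φ : FPC Γ} (hφ : φ ∈ localIdeal E P R) {γ : Γ}
    {n : ℕ} (hn : IsValidColor E P R n)
    (hclaims : ∀ p m, φ.1 p = some m → IsRestrictionOf (claim E p m) (claim E γ n)) :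
    insertP φ γ n ∈ localIdeal E P R := by
  intro δ c hδ
  rw [insertP_apply] at hδ
  split_ifs at hδ with hδγ
  · cases hδγ
    cases hδ
    refine ⟨hn, fun p m hp _ _ => ?_⟩
    rw [insertP_apply] at hp
    split_ifs at hp with hpγ
    · cases hpγ
      cases hp
      exact Or.inl (.refl _)
    · exact Or.inr (Or.inl (hclaims p m hp))
  · refine ⟨(hφ δ c hδ).1, fun p m hp hk hd => ?_⟩
    rw [insertP_apply] at hp
    split_ifs at hp with hpγ
    · cases hpγ
      cases hp
      exact Or.inl (hclaims δ c hδ)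
    · exact (hφ δ c hδ).2 p m hp hk hd

theorem isExtendable_localIdeal [DecidableEq Γ] (hE : Surjective E)
    (hinv : ∀ γ δ g : Γ, dist (γ * g) (δ * g) = dist γ δ) (hP : IsGammaIdeal P)
    (hext : IsExtendable P) (hR0 : ∀ φ, 0 ≤ R φ)
    (hRinv : ∀ (γ : Γ), ∀ φ ∈ P, R (shiftP γ φ) = R φ)
    (hjoin : ∀ l : List (FPC Γ), (∀ φ ∈ l, φ ∈ P) → l.Pairwise (RSeparated R) → joinList l ∈ P) :
    IsExtendable (localIdeal E P R) := by
  intro φ hφ γ _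
  obtain ⟨J, hJP, hJ⟩ := exists_mem_forall_claim_isRestrictionOf hinv hP hR0 hRinv hjoin hφ
  obtain ⟨K, hKP, hJK, hγK⟩ := hext.exists_isRestrictionOf_mem_domP hJP γ
  obtain ⟨n, hn, hnK⟩ := exists_isValidColor_claim_eq hE hinv hP hKP hγK
  exact ⟨n, insertP_mem_localIdeal hφ hn fun p m hp => hnK ▸ (hJ p m hp).trans hJK⟩

end Coding

theorem stmt15_general {Γ : Type*} [Group Γ] [Countable Γ] [DecidableEq Γ]
    [MetricSpace Γ]
    (hinv : ∀ γ δ g : Γ, dist (γ * g) (δ * g) = dist γ δ)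
    (P : Set (FPC Γ)) (hP : IsGammaIdeal P) (hext : IsExtendable P)
    (hjoin : HasJoinProperty P) :
    ∃ (P' : Set (FPC Γ)) (ρ : ℕ → ℕ), IsGammaIdeal P' ∧ IsExtendable P' ∧ IsLocal P' ∧
      ∀ φ ∈ P', mapP ρ φ ∈ P := by
  obtain ⟨R, hR0, hRinv, hRjoin⟩ := hjoin
  have : Nonempty (FPC Γ) := ⟨emptyP Γ⟩
  obtain ⟨E, hE⟩ := exists_surjective_nat (ℕ × FPC Γ)
  exact ⟨localIdeal E P R, decodeColor E, isGammaIdeal_localIdeal hinv,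
    isExtendable_localIdeal hE hinv hP hext hR0 hRinv hRjoin,
    ⟨fun n => 4 * colorRadius E n, fun n => by positivity, localIdeal_eq_locallyIn⟩,
    fun _ hφ => mapP_decodeColor_mem hinv hP hR0 hRinv hRjoin hφ⟩

/-- Every extendable `Γ`-ideal with the join property is reducible to a local extendable
`Γ`-ideal. -/
theorem stmt15 {Γ : Type*} [Group Γ] [Countable Γ] [Infinite Γ] [DecidableEq Γ]
    [MetricSpace Γ]
    (hinv : ∀ γ δ g : Γ, dist (γ * g) (δ * g) = dist γ δ)
    (hproper : ∀ (γ : Γ) (r : ℝ), (Metric.closedBall γ r).Finite)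
    (P : Set (FPC Γ)) (hP : IsGammaIdeal P) (hext : IsExtendable P)
    (hjoin : HasJoinProperty P) :
    ∃ (P' : Set (FPC Γ)) (ρ : ℕ → ℕ), IsGammaIdeal P' ∧ IsExtendable P' ∧ IsLocal P' ∧
      ∀ φ ∈ P', mapP ρ φ ∈ P :=
  stmt15_general hinv P hP hext hjoin

end DescColor
end

section
/- Let Γ be a countably infinite group with a proper right-invariant metric d, and let P be a local extendable Γ-ideal. Then the shift action of Γ on C^Γ, where C = (ℕ → Bool) is the Cantor space and the shift is (γ · x)(δ) = x(δγ), admits a Baire measurable P-coloring, i.e., a Baire measurable Col(P)-coloring. -/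
open Set Function Topology

namespace DescColor

variable {Γ : Type*}

/-!
Colors are assigned in stages, stage `m` using the bits `x β m` of a point `x ∈ C^Γ` as
headers. At stage `m`, an uncolored point `x` becomes a *marker* if its header bit `x 1 m` is
the only header bit of level `m` within the guard radius `D_m`, the colors already carried by
the shifts of `x` over the ball `B(1, m)` form a pattern in `P`, and no shift of `x` in the
annulus `m < d(β, 1) ≤ D_m` is colored yet; it then gets a color extending that pattern at `1`.
Each stage depends on finitely many coordinates, so it is locally constant and uses finitely
many colors; `D_m` is twice the largest `r c` among the colors of stages `≤ m`.

Let `φ` be read off from the colored shifts of a point, and let `γ` have color `c`. Among the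
colored points of `B(γ, r c)` take `b` of maximal stage `m`. Every other such point `δ` has
`d(δ, b) ≤ 2 r c ≤ D_m`: if it had stage `m` its header would contradict the uniqueness of
`b`'s header, so it is earlier, hence not in the annulus of `b`, hence in the pattern of `b`.
So the restriction of `φ` to `B(γ, r c)` is a restriction of a shift of the extended pattern
of `b`, and locality of `P` gives `φ ∈ P`. Truncating any point to a finite box and planting a
fresh header bit yields a colored point, so the colored set is dense open and, generically,
every shift of a point is colored.
-/

open Filter

lemma baireMFun_of_isOpen_inter_preimage {X Y : Type*} [TopologicalSpace X] [MeasurableSpace Y]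
    {f : X → Y} {U : Set X} (hU : U ∈ residual X) (hf : ∀ B, IsOpen (U ∩ f ⁻¹' B)) :
    BaireMFun f := by
  refine fun B _ => ⟨U ∩ f ⁻¹' B, hf B, IsMeagre.mono ?_ (show Uᶜᶜ ∈ residual X by simpa)⟩
  rw [Set.symmDiff_def]
  rintro x (⟨hxB, hx⟩ | ⟨hx, hxB⟩)
  · exact fun hxU => hx ⟨hxU, hxB⟩
  · exact absurd hx.2 hxB

lemma _root_.IsLocallyConstant.of_determined_by_finite {X Y Z ι : Type*} [TopologicalSpace X]
    {g : ι → X → Z} {s : Set ι} (hs : s.Finite) (hg : ∀ i ∈ s, IsLocallyConstant (g i))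
    {f : X → Y} (hf : ∀ x x', (∀ i ∈ s, g i x' = g i x) → f x' = f x) :
    IsLocallyConstant f := by
  refine (IsLocallyConstant.iff_exists_open f).2 fun x => ?_
  refine ⟨⋂ i ∈ s, {x' | g i x' = g i x},
    hs.isOpen_biInter fun i hi => (hg i hi).isOpen_fiber _, mem_iInter₂.2 fun _ _ => rfl,
    fun x' hx' => hf x x' (mem_iInter₂.1 hx')⟩

lemma _root_.IsLocallyConstant.forall_mem_finite {X ι : Type*} [TopologicalSpace X]
    {p : ι → X → Prop} {s : Set ι} (hs : s.Finite) (hp : ∀ i ∈ s, IsLocallyConstant (p i)) :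
    IsLocallyConstant fun x => ∀ i ∈ s, p i x :=
  .of_determined_by_finite hs hp fun _ _ h =>
    propext <| forall₂_congr fun i hi => by rw [h i hi]

lemma isLocallyConstant_eval {ι κ α : Type*} [TopologicalSpace α] [DiscreteTopology α]
    (i : ι) (k : κ) : IsLocallyConstant fun x : ι → κ → α => x i k :=
  (IsLocallyConstant.iff_continuous _).2 ((continuous_apply k).comp (continuous_apply i))

section RightShift

variable [Group Γ] {α : Type*} [TopologicalSpace α]

def rightShift (γ : Γ) : (Γ → α) ≃ₜ (Γ → α) where
  toFun x δ := x (δ * γ)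
  invFun x δ := x (δ * γ⁻¹)
  left_inv x := by ext δ; simp
  right_inv x := by ext δ; simp
  continuous_toFun := continuous_pi fun _ => continuous_apply _
  continuous_invFun := continuous_pi fun _ => continuous_apply _

@[simp]
lemma rightShift_apply (γ : Γ) (x : Γ → α) (δ : Γ) : rightShift γ x δ = x (δ * γ) := rfl

@[simp]
lemma rightShift_one (x : Γ → α) : rightShift (1 : Γ) x = x := by
  ext δ; simp

lemma rightShift_rightShift (γ γ' : Γ) (x : Γ → α) :
    rightShift γ (rightShift γ' x) = rightShift (γ * γ') x := by
  ext δ; simp [mul_assoc]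

end RightShift

section BallPattern

variable [Group Γ] [MetricSpace Γ] {α : Type*} [TopologicalSpace α]
  (hproper : ∀ (γ : Γ) (r : ℝ), (Metric.closedBall γ r).Finite)

lemma dist_mul_inv_one_eq_dist (hinv : ∀ γ δ g : Γ, dist (γ * g) (δ * g) = dist γ δ) (a b : Γ) :
    dist (a * b⁻¹) 1 = dist a b := by
  simpa using (hinv (a * b⁻¹) 1 b).symm

noncomputable def ballPattern (c : (Γ → α) → Option ℕ) (ρ : ℝ) (x : Γ → α) : FPC Γ :=
  ⟨fun β => if dist β 1 ≤ ρ then c (rightShift β x) else none,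
    (hproper 1 ρ).subset fun β hβ => by
      by_contra h
      exact hβ (if_neg h)⟩

variable {hproper} {c : (Γ → α) → Option ℕ}

lemma ballPattern_apply_one {ρ : ℝ} (hρ : 0 ≤ ρ) (x : Γ → α) :
    (ballPattern hproper c ρ x).1 1 = c x := by
  simp [ballPattern, hρ]

lemma ballPattern_apply_eq_some {ρ : ℝ} {x : Γ → α} {β : Γ} {k : ℕ}
    (h : (ballPattern hproper c ρ x).1 β = some k) : c (rightShift β x) = some k := by
  simp only [ballPattern] at h
  split_ifs at h
  exact h

lemma finite_range_ballPattern (hc : (range c).Finite) (ρ : ℝ) :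
    (range (ballPattern hproper c ρ)).Finite := by
  have := (hproper 1 ρ).to_subtype
  refine Set.Finite.of_finite_image (f := fun ψ (β : Metric.closedBall (1 : Γ) ρ) => ψ.1 β) ?_ ?_
  · refine (Set.Finite.pi fun _ => hc).subset ?_
    rintro _ ⟨_, ⟨x, rfl⟩, rfl⟩
    exact fun β _ => ⟨rightShift β.1 x, (if_pos β.2).symm⟩
  · rintro _ ⟨x, rfl⟩ _ ⟨x', rfl⟩ h
    refine Subtype.ext (funext fun β => ?_)
    by_cases hβ : dist β 1 ≤ ρ
    · exact congrFun h ⟨β, hβ⟩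
    · simp only [ballPattern, if_neg hβ]

lemma isLocallyConstant_ballPattern (hc : IsLocallyConstant c) (ρ : ℝ) :
    IsLocallyConstant (ballPattern hproper c ρ) :=
  .of_determined_by_finite (g := fun β x => c (rightShift β x)) (hproper 1 ρ)
    (fun β _ => hc.comp_continuous (rightShift β).continuous) fun x x' h =>
      Subtype.ext <| funext fun β => by
        by_cases hβ : dist β 1 ≤ ρ
        · simp only [ballPattern, if_pos hβ]
          exact h β hβ
        · simp only [ballPattern, if_neg hβ]

end BallPattern

section Construction

open scoped Classical

variable [Group Γ] [DecidableEq Γ] [MetricSpace Γ]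
variable (hproper : ∀ (γ : Γ) (r : ℝ), (Metric.closedBall γ r).Finite)
  (P : Set (FPC Γ)) (hext : IsExtendable P) (r : ℕ → ℝ)

noncomputable def extColor (φ : FPC Γ) : ℕ :=
  if h : φ ∈ P ∧ φ.1 1 = none then (hext φ h.1 1 h.2).choose else 0

noncomputable def markerColor (c : (Γ → ℕ → Bool) → Option ℕ) (m : ℕ) (x : Γ → ℕ → Bool) : ℕ :=
  extColor P hext (ballPattern hproper c m x)

-- For the stage colorings this set is finite (`finite_range_stageColoring`), so `sSup` is
-- its maximum rather than a junk value.
noncomputable def guardRadius (c : (Γ → ℕ → Bool) → Option ℕ) (m : ℕ) : ℝ :=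
  2 * sSup (r '' (some ⁻¹' range c ∪ range (markerColor hproper P hext c m)))

structure IsMarker (c : (Γ → ℕ → Bool) → Option ℕ) (m : ℕ) (x : Γ → ℕ → Bool) : Prop where
  uncolored : c x = none
  pattern_mem : ballPattern hproper c m x ∈ P
  header : x 1 m = true
  header_unique : ∀ β ∈ Metric.closedBall 1 (guardRadius hproper P hext r c m), β ≠ 1 →
    x β m = false
  annulus_uncolored : ∀ β ∈ Metric.closedBall 1 (guardRadius hproper P hext r c m),
    (m : ℝ) < dist β 1 → c (rightShift β x) = none

noncomputable def stageColoring : ℕ → (Γ → ℕ → Bool) → Option ℕ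
  | 0 => fun _ => none
  | m + 1 => fun x =>
    if IsMarker hproper P hext r (stageColoring m) m x then
      some (markerColor hproper P hext (stageColoring m) m x)
    else stageColoring m x

def coloredSet : Set (Γ → ℕ → Bool) := {x | ∃ m c, stageColoring hproper P hext r m x = some c}

noncomputable def limitColoring (x : Γ → ℕ → Bool) : ℕ :=
  if h : x ∈ coloredSet hproper P hext r then h.choose_spec.choose else 0

noncomputable def plantMarker (x₀ : Γ → ℕ → Bool) (n : ℕ) : Γ → ℕ → Bool := fun δ k =>
  if k < n ∧ dist δ 1 ≤ n then x₀ δ k else decide (δ = 1 ∧ k = n)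

variable {hproper P hext r}

local notation "col" => stageColoring hproper P hext r

section Markers

variable {c : (Γ → ℕ → Bool) → Option ℕ}

lemma IsMarker.insertP_mem {m : ℕ} {x : Γ → ℕ → Bool} (h : IsMarker hproper P hext r c m x) :
    insertP (ballPattern hproper c m x) 1 (markerColor hproper P hext c m x) ∈ P := by
  have hgood : ballPattern hproper c m x ∈ P ∧ (ballPattern hproper c m x).1 1 = none :=
    ⟨h.pattern_mem, by rw [ballPattern_apply_one (Nat.cast_nonneg m)]; exact h.uncolored⟩
  rw [markerColor, extColor, dif_pos hgood]
  exact (hext _ hgood.1 1 hgood.2).choose_spec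

lemma finite_range_markerColor (hc : (range c).Finite) (m : ℕ) :
    (range (markerColor hproper P hext c m)).Finite :=
  ((finite_range_ballPattern hc m).image (extColor P hext)).subset <| by
    rintro _ ⟨x, rfl⟩
    exact ⟨_, ⟨x, rfl⟩, rfl⟩

lemma isMarker_iff {m : ℕ} {x : Γ → ℕ → Bool} :
    IsMarker hproper P hext r c m x ↔ c x = none ∧ ballPattern hproper c m x ∈ P ∧
      x 1 m = true ∧
      (∀ β ∈ Metric.closedBall 1 (guardRadius hproper P hext r c m), β ≠ 1 → x β m = false) ∧
      ∀ β ∈ Metric.closedBall 1 (guardRadius hproper P hext r c m),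
        (m : ℝ) < dist β 1 → c (rightShift β x) = none :=
  ⟨fun ⟨h₁, h₂, h₃, h₄, h₅⟩ => ⟨h₁, h₂, h₃, h₄, h₅⟩, fun ⟨h₁, h₂, h₃, h₄, h₅⟩ => ⟨h₁, h₂, h₃, h₄, h₅⟩⟩

lemma isLocallyConstant_isMarker (hc : IsLocallyConstant c) (m : ℕ) :
    IsLocallyConstant (IsMarker hproper P hext r c m) := by
  have hfin := hproper 1 (guardRadius hproper P hext r c m)
  have hpat := (isLocallyConstant_ballPattern (hproper := hproper) hc m).comp (· ∈ P)
  have hhead := (isLocallyConstant_eval (1 : Γ) m).comp (· = true)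
  have hsep := IsLocallyConstant.forall_mem_finite hfin fun β _ =>
    (isLocallyConstant_eval β m).comp fun b => β ≠ 1 → b = false
  have hann := IsLocallyConstant.forall_mem_finite hfin fun β _ =>
    (hc.comp_continuous (rightShift β).continuous).comp fun o => (m : ℝ) < dist β 1 → o = none
  rw [show IsMarker hproper P hext r c m = _ from funext fun x => propext isMarker_iff]
  exact (hc.comp (· = none)).comp₂
    (hpat.comp₂ (hhead.comp₂ (hsep.comp₂ hann (· ∧ ·)) (· ∧ ·)) (· ∧ ·)) (· ∧ ·)

end Markers

lemma stageColoring_eq_some_iff {n : ℕ} {x : Γ → ℕ → Bool} {c : ℕ} :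
    col n x = some c ↔
      ∃ m < n, IsMarker hproper P hext r (col m) m x ∧
        markerColor hproper P hext (col m) m x = c := by
  induction n generalizing c with
  | zero => simp [stageColoring]
  | succ n ih =>
    by_cases hM : IsMarker hproper P hext r (col n) n x
    · have hnone : ∀ m < n, ¬ IsMarker hproper P hext r (col m) m x := fun m hm hMm =>
        absurd hM.uncolored (by rw [ih.2 ⟨m, hm, hMm, rfl⟩]; simp)
      simp only [stageColoring, if_pos hM, Option.some.injEq]
      constructor
      · rintro rfl
        exact ⟨n, lt_add_one n, hM, rfl⟩
      · rintro ⟨m, hm, hMm, rfl⟩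
        obtain rfl : m = n := by
          by_contra hne
          exact hnone m (by omega) hMm
        rfl
    · simp only [stageColoring, if_neg hM, ih]
      constructor
      · rintro ⟨m, hm, hMm⟩
        exact ⟨m, by omega, hMm⟩
      · rintro ⟨m, hm, hMm⟩
        obtain hlt | rfl := Nat.lt_succ_iff_lt_or_eq.1 hm
        · exact ⟨m, hlt, hMm⟩
        · exact absurd hMm.1 hM

lemma stageColoring_succ_of_isMarker {m : ℕ} {x : Γ → ℕ → Bool}
    (h : IsMarker hproper P hext r (col m) m x) :
    col (m + 1) x = some (markerColor hproper P hext (col m) m x) :=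
  stageColoring_eq_some_iff.2 ⟨m, lt_add_one m, h, rfl⟩

lemma stageColoring_mono {m n : ℕ} {x : Γ → ℕ → Bool} {c : ℕ} (h : col m x = some c)
    (hmn : m ≤ n) : col n x = some c := by
  obtain ⟨k, hk, hM, rfl⟩ := stageColoring_eq_some_iff.1 h
  exact stageColoring_eq_some_iff.2 ⟨k, by omega, hM, rfl⟩

lemma IsMarker.stage_eq {k m : ℕ} {x : Γ → ℕ → Bool}
    (hk : IsMarker hproper P hext r (col k) k x) (hm : IsMarker hproper P hext r (col m) m x) :
    k = m := by
  by_contra hne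
  wlog hlt : k < m generalizing k m
  · exact this hm hk (Ne.symm hne) (by omega)
  exact absurd hm.uncolored (by rw [stageColoring_mono (stageColoring_succ_of_isMarker hk) hlt]; simp)

lemma finite_range_stageColoring (m : ℕ) : (range (col m)).Finite := by
  induction m with
  | zero => exact (finite_singleton none).subset (range_subset_iff.2 fun _ => rfl)
  | succ m ih =>
    have hsub : range (col (m + 1)) ⊆
        range (col m) ∪ some '' range (markerColor hproper P hext (col m) m) := by
      rintro _ ⟨x, rfl⟩
      by_cases hM : IsMarker hproper P hext r (col m) m x
      · exact Or.inr ⟨_, ⟨x, rfl⟩, by simp [stageColoring, hM]⟩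
      · exact Or.inl ⟨x, by simp [stageColoring, hM]⟩
    exact (ih.union ((finite_range_markerColor ih m).image some)).subset hsub

lemma IsMarker.two_mul_r_le_guardRadius {k m : ℕ} {z : Γ → ℕ → Bool}
    (hz : IsMarker hproper P hext r (col k) k z) (hkm : k ≤ m) :
    2 * r (markerColor hproper P hext (col k) k z) ≤ guardRadius hproper P hext r (col m) m := by
  have hfin : (some ⁻¹' range (col m) ∪ range (markerColor hproper P hext (col m) m)).Finite :=
    ((finite_range_stageColoring m).preimage (Option.some_injective ℕ).injOn).union
      (finite_range_markerColor (finite_range_stageColoring m) m)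
  refine mul_le_mul_of_nonneg_left (le_csSup (hfin.image r).bddAbove (mem_image_of_mem r ?_))
    zero_le_two
  obtain hlt | rfl := hkm.lt_or_eq
  · exact Or.inl ⟨z, stageColoring_mono (stageColoring_succ_of_isMarker hz) hlt⟩
  · exact Or.inr ⟨z, rfl⟩

lemma isLocallyConstant_stageColoring (m : ℕ) : IsLocallyConstant (col m) := by
  induction m with
  | zero => exact IsLocallyConstant.const none
  | succ m ih =>
    have hM := isLocallyConstant_isMarker (hproper := hproper) (P := P) (hext := hext) (r := r) ih m
    have hcol := (isLocallyConstant_ballPattern (hproper := hproper) ih m).comp (extColor P hext)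
    exact (hM.prodMk (hcol.prodMk ih)).comp fun t => if t.1 then some t.2.1 else t.2.2

lemma IsMarker.insertP_apply {m k : ℕ} {y : Γ → ℕ → Bool} {β : Γ}
    (hy : IsMarker hproper P hext r (col m) m y)
    (hβ : dist β 1 ≤ guardRadius hproper P hext r (col m) m)
    (hz : IsMarker hproper P hext r (col k) k (rightShift β y)) (hkm : k ≤ m) :
    (insertP (ballPattern hproper (col m) m y) 1 (markerColor hproper P hext (col m) m y)).1 β =
      some (markerColor hproper P hext (col k) k (rightShift β y)) := by
  by_cases hβ1 : β = 1
  · subst hβ1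
    rw [rightShift_one] at hz ⊢
    obtain rfl := hz.stage_eq hy
    simp [insertP]
  obtain hlt | rfl := hkm.lt_or_eq
  · have hm := stageColoring_mono (stageColoring_succ_of_isMarker hz) hlt
    have hdist : dist β 1 ≤ m := by
      by_contra h
      rw [hy.annulus_uncolored β hβ (not_le.1 h)] at hm
      cases hm
    simp [insertP, ballPattern, hβ1, hdist, hm]
  · have hhead : y β k = true := by simpa using hz.header
    rw [hy.header_unique β hβ hβ1] at hhead
    cases hhead

lemma mem_of_forall_stageColoring (hinv : ∀ γ δ g : Γ, dist (γ * g) (δ * g) = dist γ δ)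
    (hP : IsGammaIdeal P) (hr0 : ∀ c, 0 ≤ r c) (hloc : P = LocallyIn P r)
    (x : Γ → ℕ → Bool) (φ : FPC Γ)
    (hφ : ∀ δ c, φ.1 δ = some c → ∃ m, col m (rightShift δ x) = some c) : φ ∈ P := by
  rw [hloc]
  intro γ c hγ
  have hmarker : ∀ δ, φ.1 δ ≠ none → ∃ k, IsMarker hproper P hext r (col k) k (rightShift δ x) ∧
      φ.1 δ = some (markerColor hproper P hext (col k) k (rightShift δ x)) := by
    intro δ hδ
    obtain ⟨cδ, hcδ⟩ := Option.ne_none_iff_exists'.1 hδ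
    obtain ⟨m, hm⟩ := hφ δ cδ hcδ
    obtain ⟨k, -, hk, hkc⟩ := stageColoring_eq_some_iff.1 hm
    exact ⟨k, hk, hcδ.trans (congrArg some hkc.symm)⟩
  choose! stage hstage using hmarker
  have hT : {δ | φ.1 δ ≠ none ∧ dist γ δ ≤ r c}.Finite := φ.2.subset fun δ h => h.1
  have hγT : γ ∈ hT.toFinset := by simp [hγ, hr0 c]
  obtain ⟨b, hbT, hbmax⟩ := hT.toFinset.exists_max_image stage ⟨γ, hγT⟩
  rw [Set.Finite.mem_toFinset] at hbT
  have hb := (hstage b hbT.1).1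
  refine hP.2 _ (hP.1 b⁻¹ _ hb.insertP_mem) _ fun δ => ?_
  show (if dist γ δ ≤ r c then φ.1 δ else none) = none ∨
    (if dist γ δ ≤ r c then φ.1 δ else none) = (insertP _ 1 _).1 (δ * b⁻¹)
  by_cases hδ : dist γ δ ≤ r c ∧ φ.1 δ ≠ none
  swap
  · left
    split_ifs with h
    · exact not_not.1 fun h' => hδ ⟨h, h'⟩
    · rfl
  right
  have hδT : δ ∈ hT.toFinset := by simp [hδ]
  have hγc : c = markerColor hproper P hext (col (stage γ)) (stage γ) (rightShift γ x) :=
    Option.some_injective _ (hγ.symm.trans (hstage γ (by simp [hγ])).2)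
  have hdist : dist (δ * b⁻¹) 1 ≤ guardRadius hproper P hext r (col (stage b)) (stage b) := by
    rw [dist_mul_inv_one_eq_dist hinv]
    calc dist δ b ≤ dist γ δ + dist γ b := by rw [dist_comm γ δ]; exact dist_triangle δ γ b
      _ ≤ 2 * r c := by linarith [hδ.1, hbT.2]
      _ ≤ _ := hγc ▸ (hstage γ (by simp [hγ])).1.two_mul_r_le_guardRadius (hbmax γ hγT)
  have hshift : rightShift (δ * b⁻¹) (rightShift b x) = rightShift δ x := by
    rw [rightShift_rightShift, inv_mul_cancel_right]
  obtain ⟨hδm, hδc⟩ := hstage δ hδ.2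
  rw [if_pos hδ.1, hδc, hb.insertP_apply hdist (hshift ▸ hδm) (hbmax δ hδT), hshift]

lemma tendsto_plantMarker (x₀ : Γ → ℕ → Bool) : Tendsto (plantMarker x₀) atTop (𝓝 x₀) :=
  tendsto_pi_nhds.2 fun δ => tendsto_pi_nhds.2 fun k =>
    tendsto_atTop_of_eventually_const (i₀ := max (k + 1) ⌈dist δ 1⌉₊) fun n hn =>
      if_pos ⟨by omega, Nat.ceil_le.1 (le_of_max_le_right hn)⟩

lemma plantMarker_mem_coloredSet (hinv : ∀ γ δ g : Γ, dist (γ * g) (δ * g) = dist γ δ)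
    (hP : IsGammaIdeal P) (hr0 : ∀ c, 0 ≤ r c) (hloc : P = LocallyIn P r)
    (x₀ : Γ → ℕ → Bool) (n : ℕ) : plantMarker x₀ n ∈ coloredSet hproper P hext r := by
  set y := plantMarker x₀ n
  by_contra hy
  simp only [coloredSet, mem_ofPred_eq, not_exists] at hy
  have hmarker : IsMarker hproper P hext r (col n) n y := by
    refine ⟨Option.eq_none_iff_forall_ne_some.2 (hy n), ?_, by simp [y, plantMarker],
      fun β _ hβ => by simp [y, plantMarker, hβ], fun β _ hβ => ?_⟩
    · exact mem_of_forall_stageColoring (hproper := hproper) (hext := hext) hinv hP hr0 hloc y _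
        fun β c h => ⟨n, ballPattern_apply_eq_some h⟩
    · rcases h : col n (rightShift β y) with _ | c
      · rfl
      obtain ⟨k, hk, hM, -⟩ := stageColoring_eq_some_iff.1 h
      have hhead := hM.header
      simp [y, plantMarker, hk, not_le.2 hβ] at hhead
      omega
  exact hy _ _ (stageColoring_succ_of_isMarker hmarker)

lemma coloredSet_mem_residual (hinv : ∀ γ δ g : Γ, dist (γ * g) (δ * g) = dist γ δ)
    (hP : IsGammaIdeal P) (hr0 : ∀ c, 0 ≤ r c) (hloc : P = LocallyIn P r) :
    coloredSet hproper P hext r ∈ residual (Γ → ℕ → Bool) := by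
  refine residual_of_dense_open ?_ fun x₀ => mem_closure_of_tendsto (tendsto_plantMarker x₀)
    (Eventually.of_forall (plantMarker_mem_coloredSet hinv hP hr0 hloc x₀))
  simp only [coloredSet, ofPred_exists]
  exact isOpen_iUnion fun m => isOpen_iUnion fun c =>
    (isLocallyConstant_stageColoring m).isOpen_fiber _

lemma limitColoring_eq {m : ℕ} {x : Γ → ℕ → Bool} {c : ℕ} (h : col m x = some c) :
    limitColoring hproper P hext r x = c := by
  have hx : x ∈ coloredSet hproper P hext r := ⟨m, c, h⟩
  rw [limitColoring, dif_pos hx]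
  exact Option.some_injective _
    ((stageColoring_mono hx.choose_spec.choose_spec (le_max_left _ m)).symm.trans
      (stageColoring_mono h (le_max_right _ _)))

lemma baireMFun_limitColoring (hinv : ∀ γ δ g : Γ, dist (γ * g) (δ * g) = dist γ δ)
    (hP : IsGammaIdeal P) (hr0 : ∀ c, 0 ≤ r c) (hloc : P = LocallyIn P r) :
    BaireMFun (limitColoring hproper P hext r) := by
  refine baireMFun_of_isOpen_inter_preimage
    (coloredSet_mem_residual (hproper := hproper) (hext := hext) hinv hP hr0 hloc) fun B => ?_
  have hB : coloredSet hproper P hext r ∩ limitColoring hproper P hext r ⁻¹' B =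
      ⋃ m, col m ⁻¹' (some '' B) := by
    ext x
    simp only [coloredSet, mem_inter_iff, mem_ofPred_eq, mem_preimage, mem_iUnion, mem_image]
    constructor
    · rintro ⟨⟨m, c, h⟩, hxB⟩
      exact ⟨m, c, limitColoring_eq h ▸ hxB, h.symm⟩
    · rintro ⟨m, c, hc, h⟩
      exact ⟨⟨m, c, h.symm⟩, (limitColoring_eq h.symm).symm ▸ hc⟩
  rw [hB]
  exact isOpen_iUnion fun m => isLocallyConstant_stageColoring m _

lemma eventually_forall_rightShift_mem_coloredSet [Countable Γ]
    (hinv : ∀ γ δ g : Γ, dist (γ * g) (δ * g) = dist γ δ)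
    (hP : IsGammaIdeal P) (hr0 : ∀ c, 0 ≤ r c) (hloc : P = LocallyIn P r) :
    ∀ᶠ x in residual (Γ → ℕ → Bool), ∀ γ : Γ, rightShift γ x ∈ coloredSet hproper P hext r :=
  eventually_countable_forall.2 fun γ =>
    tendsto_residual_of_isOpenMap (rightShift γ).continuous (rightShift γ).isOpenMap
      (coloredSet_mem_residual hinv hP hr0 hloc)

end Construction

theorem stmt16_general {Γ : Type*} [Group Γ] [Countable Γ] [DecidableEq Γ]
    [MetricSpace Γ]
    (hinv : ∀ γ δ g : Γ, dist (γ * g) (δ * g) = dist γ δ)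
    (hproper : ∀ (γ : Γ) (r : ℝ), (Metric.closedBall γ r).Finite)
    (P : Set (FPC Γ)) (hP : IsGammaIdeal P) (hext : IsExtendable P) (hloc : IsLocal P) :
    ∃ f : (Γ → ℕ → Bool) → ℕ, BaireMFun f ∧
      {x : Γ → ℕ → Bool | (fun γ : Γ => f fun δ : Γ => x (δ * γ)) ∈ ColOf P}
        ∈ residual (Γ → ℕ → Bool) := by
  obtain ⟨r, hr0, hloc⟩ := hloc
  refine ⟨limitColoring hproper P hext r, baireMFun_limitColoring hinv hP hr0 hloc, ?_⟩
  filter_upwards [eventually_forall_rightShift_mem_coloredSet (hproper := hproper) (hext := hext)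
    hinv hP hr0 hloc] with x hx S
  refine mem_of_forall_stageColoring (hproper := hproper) (hext := hext) hinv hP hr0 hloc x _
    fun δ c hδ => ?_
  obtain ⟨m, c', hm⟩ := hx δ
  have hδS : δ ∈ S := by
    by_contra h
    simp [restrictTo, h] at hδ
  simp only [restrictTo, if_pos hδS, Option.some.injEq] at hδ
  exact ⟨m, hm.trans (congrArg some ((limitColoring_eq hm).symm.trans hδ))⟩

/-- For every local extendable `Γ`-ideal `P`, the shift action of `Γ` on the product of
Cantor spaces `C^Γ` admits a Baire measurable `P`-coloring. -/
theorem stmt16 {Γ : Type*} [Group Γ] [Countable Γ] [Infinite Γ] [DecidableEq Γ]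
    [MetricSpace Γ]
    (hinv : ∀ γ δ g : Γ, dist (γ * g) (δ * g) = dist γ δ)
    (hproper : ∀ (γ : Γ) (r : ℝ), (Metric.closedBall γ r).Finite)
    (P : Set (FPC Γ)) (hP : IsGammaIdeal P) (hext : IsExtendable P) (hloc : IsLocal P) :
    ∃ f : (Γ → ℕ → Bool) → ℕ, BaireMFun f ∧
      {x : Γ → ℕ → Bool | (fun γ : Γ => f fun δ : Γ => x (δ * γ)) ∈ ColOf P}
        ∈ residual (Γ → ℕ → Bool) :=
  stmt16_general hinv hproper P hP hext hloc

end DescColor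
end

section
/- Let Γ be a countably infinite group with a proper right-invariant metric d. Every local Γ-ideal has the join property. -/
open Set Function Topology

namespace DescColor

variable {Γ : Type*}

/-! The join property holds with `R φ` the largest locality radius `r c` over the colors `c` used
by `φ`. If the members of a family are `R`-separated and `γ` carries color `c` in one member `φ`,
the ball `B(γ, r c)` meets the domain of no other member, so the join agrees with `φ` on that ball
and locality puts the join in `P`. -/

def colors (φ : FPC Γ) : Set ℕ := {c | ∃ γ : Γ, φ.1 γ = some c}

lemma colors_finite (φ : FPC Γ) : (colors φ).Finite := by
  refine (φ.2.image fun γ => (φ.1 γ).getD 0).subset ?_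
  rintro c ⟨γ, hγ⟩
  exact ⟨γ, by simp [hγ], by simp [hγ]⟩

lemma colors_shiftP [Group Γ] (γ : Γ) (φ : FPC Γ) : colors (shiftP γ φ) = colors φ := by
  ext c
  constructor
  · rintro ⟨δ, h⟩
    exact ⟨δ * γ, h⟩
  · rintro ⟨δ, h⟩
    exact ⟨δ * γ⁻¹, by simpa [shiftP] using h⟩

noncomputable def maxRadius (r : ℕ → ℝ) (φ : FPC Γ) : ℝ :=
  sSup (insert 0 (r '' colors φ))

section maxRadius

variable (r : ℕ → ℝ)

lemma bddAbove_radii (φ : FPC Γ) : BddAbove (insert 0 (r '' colors φ)) :=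
  (((colors_finite φ).image r).insert 0).bddAbove

lemma maxRadius_nonneg (φ : FPC Γ) : 0 ≤ maxRadius r φ :=
  le_csSup (bddAbove_radii r φ) (mem_insert _ _)

lemma le_maxRadius {φ : FPC Γ} {γ : Γ} {c : ℕ} (h : φ.1 γ = some c) : r c ≤ maxRadius r φ :=
  le_csSup (bddAbove_radii r φ) (mem_insert_of_mem _ ⟨c, ⟨γ, h⟩, rfl⟩)

lemma maxRadius_shiftP [Group Γ] (γ : Γ) (φ : FPC Γ) :
    maxRadius r (shiftP γ φ) = maxRadius r φ := by
  rw [maxRadius, maxRadius, colors_shiftP]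

end maxRadius

lemma joinList_eq_some {l : List (FPC Γ)} {δ : Γ} {c : ℕ} (h : (joinList l).1 δ = some c) :
    ∃ φ ∈ l, φ.1 δ = some c := by
  induction l with
  | nil => simp [joinList, emptyP] at h
  | cons ψ t ih =>
    change (joinP ψ (joinList t)).1 δ = some c at h
    rcases hψ : ψ.1 δ with _ | c'
    · simp only [joinP, hψ] at h
      obtain ⟨φ, hφ, hφδ⟩ := ih h
      exact ⟨φ, List.mem_cons_of_mem _ hφ, hφδ⟩
    · simp only [joinP, hψ] at h
      exact ⟨ψ, List.mem_cons_self, hψ.trans h⟩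

lemma domP_subset_domP_joinList {l : List (FPC Γ)} {φ : FPC Γ} (hφ : φ ∈ l) :
    domP φ ⊆ domP (joinList l) := by
  intro δ hδ
  induction l with
  | nil => simp at hφ
  | cons ψ t ih =>
    change (joinP ψ (joinList t)).1 δ ≠ none
    rcases hψ : ψ.1 δ with _ | c
    · have hφt : φ ∈ t := by
        rcases List.mem_cons.1 hφ with rfl | ht
        · exact absurd hψ hδ
        · exact ht
      simp only [joinP, hψ]
      exact ih hφt
    · simp [joinP, hψ]

lemma joinList_apply_eq {l : List (FPC Γ)} {φ : FPC Γ} {δ : Γ} (hφ : φ ∈ l)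
    (h : ∀ ψ ∈ l, ψ ≠ φ → ψ.1 δ = none) : (joinList l).1 δ = φ.1 δ := by
  rcases hj : (joinList l).1 δ with _ | c
  · by_contra hφδ
    exact domP_subset_domP_joinList hφ (Ne.symm hφδ) hj
  · obtain ⟨ψ, hψ, hψδ⟩ := joinList_eq_some hj
    by_cases hψφ : ψ = φ
    · rw [← hψφ, hψδ]
    · simp [h ψ hψ hψφ] at hψδ

lemma restrictBall_joinList [MetricSpace Γ] {l : List (FPC Γ)} {φ : FPC Γ} {γ : Γ} {ρ : ℝ}
    (hφ : φ ∈ l) (h : ∀ ψ ∈ l, ψ ≠ φ → ∀ δ, dist γ δ ≤ ρ → ψ.1 δ = none) :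
    restrictBall (joinList l) γ ρ = restrictBall φ γ ρ := by
  refine Subtype.ext (funext fun δ => ?_)
  change (if dist γ δ ≤ ρ then (joinList l).1 δ else none) = if dist γ δ ≤ ρ then φ.1 δ else none
  split_ifs with hδ
  · exact joinList_apply_eq hφ fun ψ hψ hψφ => h ψ hψ hψφ δ hδ
  · rfl

section RSeparated

variable [MetricSpace Γ] {R : FPC Γ → ℝ}

instance : Std.Symm (RSeparated R) where
  symm _ _ h γ hγ δ hδ := by
    rw [dist_comm, add_comm]
    exact h δ hδ γ hγ

lemma RSeparated.apply_eq_none {φ ψ : FPC Γ} (h : RSeparated R φ ψ) (hψR : 0 ≤ R ψ)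
    {γ δ : Γ} (hγ : γ ∈ domP φ) (hδ : dist γ δ ≤ R φ) : ψ.1 δ = none := by
  by_contra hψδ
  linarith [h γ hγ δ hψδ]

end RSeparated

lemma joinList_mem_locallyIn [MetricSpace Γ] {P : Set (FPC Γ)} {r : ℕ → ℝ} {l : List (FPC Γ)}
    (hl : ∀ φ ∈ l, φ ∈ LocallyIn P r) (hsep : l.Pairwise (RSeparated (maxRadius r))) :
    joinList l ∈ LocallyIn P r := by
  intro γ c hγ
  obtain ⟨φ, hφ, hφγ⟩ := joinList_eq_some hγ
  have hγφ : γ ∈ domP φ := by simp [domP, hφγ]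
  have hball : ∀ ψ ∈ l, ψ ≠ φ → ∀ δ, dist γ δ ≤ r c → ψ.1 δ = none :=
    fun ψ hψ hψφ δ hδ => (hsep.forall hφ hψ (Ne.symm hψφ)).apply_eq_none
      (maxRadius_nonneg r ψ) hγφ (hδ.trans (le_maxRadius r hφγ))
  rw [restrictBall_joinList hφ hball]
  exact hl φ hφ γ c hφγ

theorem stmt17_general {Γ : Type*} [Group Γ] [MetricSpace Γ]
    (P : Set (FPC Γ)) (hloc : IsLocal P) :
    HasJoinProperty P := by
  obtain ⟨r, -, hPr⟩ := hloc
  refine ⟨maxRadius r, maxRadius_nonneg r, fun γ φ _ => maxRadius_shiftP r γ φ, ?_⟩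
  intro l hl hsep
  rw [hPr] at hl ⊢
  exact joinList_mem_locallyIn hl hsep

/-- Every local `Γ`-ideal has the join property. -/
theorem stmt17 {Γ : Type*} [Group Γ] [Countable Γ] [Infinite Γ] [MetricSpace Γ]
    (hinv : ∀ γ δ g : Γ, dist (γ * g) (δ * g) = dist γ δ)
    (hproper : ∀ (γ : Γ) (r : ℝ), (Metric.closedBall γ r).Finite)
    (P : Set (FPC Γ)) (hP : IsGammaIdeal P) (hloc : IsLocal P) :
    HasJoinProperty P :=
  stmt17_general P hloc

end DescColor
end

section
/- Let Γ be a countably infinite group with a proper right-invariant metric d, and let α be a free continuous action of Γ on a nonempty compact metrizable space X that is minimal, i.e., every orbit {γ · x : γ ∈ Γ} is dense in X. Suppose A ⊆ X is a nonmeager Baire measurable set. Then there exists R ∈ [0, ∞) such that the set {x ∈ X : ∃ γ ∈ Γ, d(1, γ) ≤ R and γ · x ∈ A} is comeager in X. -/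
open Set Function Topology

namespace DescColor

variable {Γ : Type*}

/-- For a free minimal continuous action of `Γ` on a nonempty compact metrizable space
and a nonmeager Baire measurable set `A`, some bounded translate covers a comeager set. -/
theorem stmt19 {Γ : Type*} [Group Γ] [Countable Γ] [Infinite Γ] [MetricSpace Γ]
    (hinv : ∀ γ δ g : Γ, dist (γ * g) (δ * g) = dist γ δ)
    (hproper : ∀ (γ : Γ) (r : ℝ), (Metric.closedBall γ r).Finite)
    (X : Type*) [TopologicalSpace X] [CompactSpace X]
    [TopologicalSpace.MetrizableSpace X] [Nonempty X] [MulAction Γ X]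
    (hcont : ∀ γ : Γ, Continuous fun x : X => γ • x)
    (hfree : ∀ (γ : Γ) (x : X), γ • x = x → γ = 1)
    (hmin : ∀ x : X, Dense {y : X | ∃ γ : Γ, γ • x = y})
    (A : Set X) (hA : BaireMSet A) (hnm : ¬ IsMeagre A) :
    ∃ R : ℝ, 0 ≤ R ∧
      {x : X | ∃ γ : Γ, dist (1 : Γ) γ ≤ R ∧ γ • x ∈ A} ∈ residual X := by
  classical
  -- extract the open set U with A Δ U meager
  obtain ⟨U, hUopen, hUm⟩ := hA
  have hUA : IsMeagre (U \ A) := hUm.mono (fun x hx => by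
    simp only [mem_diff] at hx
    simp [symmDiff_def, hx.1, hx.2])
  -- U is nonempty, otherwise A would be meager
  have hUne : U.Nonempty := by
    rcases U.eq_empty_or_nonempty with h | h
    · exfalso; apply hnm
      apply hUm.mono
      intro x hx
      simp [symmDiff_def, h, hx]
    · exact h
  -- homeomorphisms given by the action
  have hopen : ∀ γ : Γ, IsOpenMap (fun x : X => γ • x) := by
    intro γ
    exact (Homeomorph.mk (MulAction.toPerm γ) (hcont γ) (hcont γ⁻¹)).isOpenMap
  -- cover X by translates of U
  have hcov : (Set.univ : Set X) ⊆ ⋃ γ : Γ, (fun x : X => γ • x) ⁻¹' U := by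
    intro x _
    obtain ⟨y, ⟨γ, hγ⟩, hyU⟩ := (hmin x).exists_mem_open hUopen hUne
    exact mem_iUnion.2 ⟨γ, by simp [hγ, hyU]⟩
  obtain ⟨s, hs⟩ := isCompact_univ.elim_finite_subcover
    (fun γ : Γ => (fun x : X => γ • x) ⁻¹' U)
    (fun γ => hUopen.preimage (hcont γ)) hcov
  have hsne : s.Nonempty := by
    obtain ⟨x⟩ := ‹Nonempty X›
    obtain ⟨γ, hγs, -⟩ := mem_iUnion₂.1 (hs (mem_univ x))
    exact ⟨γ, hγs⟩
  refine ⟨s.sup' hsne (fun γ => dist (1 : Γ) γ), ?_, ?_⟩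
  · obtain ⟨γ, hγ⟩ := hsne
    exact le_trans dist_nonneg (Finset.le_sup' _ hγ)
  · -- the comeager set
    have key : (⋂ γ ∈ s, {x : X | γ • x ∉ U \ A}) ∈ residual X := by
      refine (Filter.biInter_finset_mem s).2 (fun γ _ => ?_)
      have : IsMeagre ((fun x : X => γ • x) ⁻¹' (U \ A)) :=
        hUA.preimage_of_isOpenMap (hcont γ) (hopen γ)
      exact this
    refine Filter.mem_of_superset key ?_
    intro x hx
    obtain ⟨γ, hγs, hγU⟩ := mem_iUnion₂.1 (hs (mem_univ x))
    refine ⟨γ, Finset.le_sup' _ hγs, ?_⟩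
    have hnd : γ • x ∉ U \ A := by
      have := mem_iInter₂.1 hx γ hγs
      exact this
    by_contra hA'
    exact hnd ⟨hγU, hA'⟩

end DescColor
end
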